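/- arXiv:2003.11575 — 7 statements merged into one kernel-verified Lean document; each statement's English description precedes it below -/
import Mathlib

section
/- Every countable connected simple graph has a normal spanning tree. -/
open Set

namespace NST

variable {V : Type*}

/-- A ray (one-way infinite path) in `G`, given by its vertex sequence. -/
def IsRay (G : SimpleGraph V) (f : ℕ → V) : Prop :=
  Function.Injective f ∧ ∀ n, G.Adj (f n) (f (n + 1))

/-- `S` separates `A` from `B` in `G`: every walk from `A` to `B` meets `S`. -/
def Separates (G : SimpleGraph V) (S A B : Set V) : Prop :=
  ∀ a ∈ A, ∀ b ∈ B, ∀ p : G.Walk a b, ∃ s ∈ S, s ∈ p.support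

/-- `U` is dispersed in `G`: every ray can be separated from `U` by a finite
vertex set (separating `U` from a tail of the ray). -/
def Dispersed (G : SimpleGraph V) (U : Set V) : Prop :=
  ∀ f : ℕ → V, IsRay G f →
    ∃ S : Set V, S.Finite ∧ ∃ N : ℕ, Separates G S U (f '' {n | N ≤ n})

/-- A subdivision of the countably infinite complete graph `K^{ℵ₀}` inside `G`:
countably many branch vertices, pairwise joined by internally disjoint paths. -/
structure KSubdivision (G : SimpleGraph V) where
  branch : ℕ → V
  inj : Function.Injective branch
  path : ∀ i j : ℕ, i < j → G.Walk (branch i) (branch j)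
  isPath : ∀ i j (h : i < j), (path i j h).IsPath
  internallyDisjoint : ∀ i j (h : i < j), ∀ i' j' (h' : i' < j'), (i, j) ≠ (i', j') →
    ∀ v, v ∈ (path i j h).support → v ∈ (path i' j' h').support →
      (v = branch i ∨ v = branch j) ∧ (v = branch i' ∨ v = branch j')

/-- The vertex set of a subdivided `K^{ℵ₀}`. -/
def KSubdivision.verts {G : SimpleGraph V} (K : KSubdivision G) : Set V :=
  ⋃ (i : ℕ) (j : ℕ) (h : i < j), {v | v ∈ (K.path i j h).support}

/-- `U` is `TK^{ℵ₀}`-dispersed in `G`: every subdivided infinite clique in `G`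
can be separated from `U` by a finite vertex set. -/
def TKDispersed (G : SimpleGraph V) (U : Set V) : Prop :=
  ∀ K : KSubdivision G, ∃ S : Set V, S.Finite ∧ Separates G S U K.verts

/-- Tree-order of a (spanning) tree `T` on `V` with root `r`:
`u ≤ v` iff `u` lies on every (equivalently, the unique) `r`–`v` path in `T`. -/
def TreeLE (T : SimpleGraph V) (r u v : V) : Prop :=
  ∀ p : T.Walk r v, p.IsPath → u ∈ p.support

/-- `T` is a normal spanning tree of `G` with root `r`. -/
def IsNormalSpanningTree (G T : SimpleGraph V) (r : V) : Prop :=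
  T ≤ G ∧ T.IsTree ∧ ∀ u v : V, G.Adj u v → TreeLE T r u v ∨ TreeLE T r v u

/-- `G` has a normal spanning tree. -/
def HasNST (G : SimpleGraph V) : Prop :=
  ∃ (T : SimpleGraph V) (r : V), IsNormalSpanningTree G T r

/-- Tree-order for a rooted tree given as a subgraph `T ⊆ G`. -/
def SubTreeLE (G : SimpleGraph V) (T : G.Subgraph) (r u v : V) : Prop :=
  ∃ (hr : r ∈ T.verts) (hu : u ∈ T.verts) (hv : v ∈ T.verts),
    ∀ p : T.coe.Walk ⟨r, hr⟩ ⟨v, hv⟩, p.IsPath → ⟨u, hu⟩ ∈ p.support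

/-- `p` is a `T`-path in `G`: a nontrivial path with both ends in `T` but all
edges and inner vertices outside `T`. -/
def IsTPath (G : SimpleGraph V) (T : G.Subgraph) {u v : V} (p : G.Walk u v) : Prop :=
  p.IsPath ∧ 0 < p.length ∧ u ∈ T.verts ∧ v ∈ T.verts ∧
    (∀ w ∈ p.support, w ≠ u → w ≠ v → w ∉ T.verts) ∧
    ∀ e ∈ p.edges, e ∉ T.edgeSet

/-- `T` is a normal rooted tree in `G` with root `r`: it is a tree containing `r`,
and the endvertices of every `T`-path in `G` are comparable in its tree-order. -/
def IsNormalTree (G : SimpleGraph V) (T : G.Subgraph) (r : V) : Prop :=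
  T.coe.IsTree ∧ r ∈ T.verts ∧
    ∀ (u v : V) (p : G.Walk u v), IsTPath G T p →
      SubTreeLE G T r u v ∨ SubTreeLE G T r v u

/-- `D` is (the vertex set of) a connected component of the subgraph of `G`
induced on `A`: a maximal subset of `A` inducing a connected subgraph. -/
def IsComponentOf (G : SimpleGraph V) (A D : Set V) : Prop :=
  D ⊆ A ∧ D.Nonempty ∧ (G.induce D).Connected ∧
    ∀ D' : Set V, D ⊆ D' → D' ⊆ A → (G.induce D').Connected → D' = D

/-- The neighbourhood `N(D)` of a set `D` in (the vertex set of) `T`. -/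
def NbhdIn (G : SimpleGraph V) (T : G.Subgraph) (D : Set V) : Set V :=
  {x ∈ T.verts | ∃ d ∈ D, G.Adj x d}

/-- The subgraph `T` of `G` is rayless: it contains no one-way infinite path. -/
def Rayless {W : Type*} {G : SimpleGraph W} (T : G.Subgraph) : Prop :=
  ¬ ∃ f : ℕ → W, Function.Injective f ∧ ∀ n, T.Adj (f n) (f (n + 1))

/-- `x` dominates the ray `f` in `G`: no finite vertex set avoiding `x`
separates `x` from (a tail of) the ray. -/
def Dominates (G : SimpleGraph V) (f : ℕ → V) (x : V) : Prop :=
  ∀ S : Set V, S.Finite → x ∉ S →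
    ∃ (n : ℕ) (p : G.Walk x (f n)), ∀ s ∈ S, s ∉ p.support

end NST

open NST

/-!
Jung's argument. Enumerate the vertices and grow finite normal trees `T₀ ⊆ T₁ ⊆ ⋯` from a
single root. To add a vertex `t` outside `Tₙ`, look at the vertices of `Tₙ` joined to `t` by a
walk whose other vertices avoid `Tₙ`: any two of them are joined through `t` outside `Tₙ`, so by
normality they form a chain in the tree-order. Hanging a path to `t` below the top `x` of this
chain keeps the tree normal, since every new vertex can only see tree vertices below `x`. The union
of the chain of trees is a normal spanning tree.
-/

open SimpleGraph

namespace NST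

variable {V : Type*} {G : SimpleGraph V}

def ReachableOutside (G : SimpleGraph V) (D : Set V) (u v : V) : Prop :=
  ∃ p : G.Walk u v, ∀ y ∈ p.support, y ≠ u → y ≠ v → y ∉ D

namespace ReachableOutside

variable {D D' : Set V} {u v w : V}

lemma of_adj (h : G.Adj u v) : ReachableOutside G D u v :=
  ⟨h.toWalk, fun y hy hu hv => by simp_all⟩

lemma symm : ReachableOutside G D u v → ReachableOutside G D v u
  | ⟨p, hp⟩ => ⟨p.reverse, fun y hy hv hu => hp y (by simpa using hy) hu hv⟩

lemma mono (hD : D ⊆ D') : ReachableOutside G D' u v → ReachableOutside G D u v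
  | ⟨p, hp⟩ => ⟨p, fun y hy hu hv hyD => hp y hy hu hv (hD hyD)⟩

lemma trans (huv : ReachableOutside G D u v) (hv : v ∉ D) (hvw : ReachableOutside G D v w) :
    ReachableOutside G D u w := by
  obtain ⟨p, hp⟩ := huv
  obtain ⟨q, hq⟩ := hvw
  refine ⟨p.append q, fun y hy hu hw => ?_⟩
  by_cases hyv : y = v
  · exact hyv ▸ hv
  rcases (Walk.mem_support_append_iff p q).1 hy with hy | hy
  · exact hp y hy hu hyv
  · exact hq y hy hyv hw

end ReachableOutside

lemma exists_reachableOutside_of_walk {D : Set V} {a t : V} (p : G.Walk a t) (ht : t ∉ D)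
    (hp : ∃ y ∈ p.support, y ∈ D) : ∃ u ∈ D, ReachableOutside G D u t := by
  induction p with
  | nil =>
    obtain ⟨y, hy, hyD⟩ := hp
    rw [Walk.support_nil, List.mem_singleton] at hy
    exact absurd (hy ▸ hyD) ht
  | @cons a b t hab q ih =>
    by_cases hq : ∃ y ∈ q.support, y ∈ D
    · exact ih ht hq
    push Not at hq
    obtain ⟨y, hy, hyD⟩ := hp
    rw [Walk.support_cons, List.mem_cons] at hy
    obtain rfl := hy.resolve_right fun hy => hq y hy hyD
    refine ⟨y, hyD, Walk.cons hab q, fun z hz hzy _ => ?_⟩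
    rw [Walk.support_cons, List.mem_cons] at hz
    exact hq z (hz.resolve_left hzy)

/-- A normal tree in `G` with root `r` and vertex set `dom`, recorded by its branches:
`branch v` is the `r`–`v` path of the tree, so the tree-order is the prefix order on branches.
Normality is asked of every walk between tree vertices whose inner vertices avoid the tree. -/
structure BranchMap (G : SimpleGraph V) (r : V) where
  dom : Set V
  branch : V → List V
  root_mem : r ∈ dom
  branch_root : branch r = [r]
  exists_parent : ∀ v ∈ dom, v ≠ r → ∃ u ∈ dom, G.Adj u v ∧ branch v = branch u ++ [v]
  comparable : ∀ u ∈ dom, ∀ v ∈ dom, ReachableOutside G dom u v →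
    branch u <+: branch v ∨ branch v <+: branch u

namespace BranchMap

variable {r : V}

instance : Preorder (BranchMap G r) where
  le σ τ := σ.dom ⊆ τ.dom ∧ ∀ v ∈ σ.dom, τ.branch v = σ.branch v
  le_refl _ := ⟨subset_rfl, fun _ _ => rfl⟩
  le_trans _ _ _ h₁ h₂ := ⟨h₁.1.trans h₂.1, fun v hv => (h₂.2 v (h₁.1 hv)).trans (h₁.2 v hv)⟩

def base (G : SimpleGraph V) (r : V) : BranchMap G r where
  dom := {r}
  branch v := [v]
  root_mem := rfl
  branch_root := rfl
  exists_parent _ hv hvr := absurd hv hvr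
  comparable _ hu _ hv _ := by
    rw [Set.mem_singleton_iff] at hu hv
    exact .inl (hu ▸ hv ▸ List.prefix_rfl)

section

variable (σ : BranchMap G r) {u v : V}

lemma getLast?_branch (hv : v ∈ σ.dom) : (σ.branch v).getLast? = some v := by
  by_cases hvr : v = r
  · simp [hvr, σ.branch_root]
  obtain ⟨u, -, -, h⟩ := σ.exists_parent v hv hvr
  simp [h]

lemma mem_branch (hv : v ∈ σ.dom) : v ∈ σ.branch v :=
  List.mem_of_getLast? (σ.getLast?_branch hv)

lemma branch_injOn : Set.InjOn σ.branch σ.dom := fun _ hu _ hv h =>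
  Option.some.inj ((σ.getLast?_branch hu).symm.trans (h ▸ σ.getLast?_branch hv))

section Attach

variable {x : V} (hx : x ∈ σ.dom) (hv : v ∉ σ.dom) (hxv : G.Adj x v)
  (hmax : ∀ u ∈ σ.dom, ReachableOutside G σ.dom u v → σ.branch u <+: σ.branch x)

open Classical in
noncomputable def attach : BranchMap G r :=
  have hold : ∀ u ∈ σ.dom,
      Function.update σ.branch v (σ.branch x ++ [v]) u = σ.branch u := fun u hu =>
    Function.update_of_ne (ne_of_mem_of_not_mem hu hv) _ _
  { dom := insert v σ.dom
    branch := Function.update σ.branch v (σ.branch x ++ [v])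
    root_mem := Set.mem_insert_of_mem _ σ.root_mem
    branch_root := (hold r σ.root_mem).trans σ.branch_root
    exists_parent := by
      rintro w (rfl | hw) hwr
      · exact ⟨x, Set.mem_insert_of_mem _ hx, hxv, by simp [hold x hx]⟩
      obtain ⟨u, hu, huw, h⟩ := σ.exists_parent w hw hwr
      exact ⟨u, Set.mem_insert_of_mem _ hu, huw, by rw [hold w hw, hold u hu, h]⟩
    comparable := by
      have hsub : σ.dom ⊆ insert v σ.dom := Set.subset_insert _ _
      rintro u₁ (rfl | h₁) u₂ (rfl | h₂) h
      · exact .inl List.prefix_rfl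
      · rw [hold u₂ h₂, Function.update_self]
        exact .inr ((hmax u₂ h₂ (h.symm.mono hsub)).trans (List.prefix_append _ _))
      · rw [hold u₁ h₁, Function.update_self]
        exact .inl ((hmax u₁ h₁ (h.mono hsub)).trans (List.prefix_append _ _))
      · rw [hold u₁ h₁, hold u₂ h₂]
        exact σ.comparable u₁ h₁ u₂ h₂ (h.mono hsub) }

@[simp]
lemma attach_dom : (σ.attach hx hv hxv hmax).dom = insert v σ.dom := rfl

lemma attach_branch_self : (σ.attach hx hv hxv hmax).branch v = σ.branch x ++ [v] := by
  simp [attach]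

open Classical in
lemma attach_branch_of_mem (hu : u ∈ σ.dom) : (σ.attach hx hv hxv hmax).branch u = σ.branch u :=
  Function.update_of_ne (ne_of_mem_of_not_mem hu hv) _ _

lemma le_attach : σ ≤ σ.attach hx hv hxv hmax :=
  ⟨Set.subset_insert _ _, fun _ hu => σ.attach_branch_of_mem hx hv hxv hmax hu⟩

end Attach

lemma exists_le_of_isPath {x t : V} (p : G.Walk x t) (hp : p.IsPath) (hx : x ∈ σ.dom)
    (hout : ∀ y ∈ p.support, y ≠ x → y ∉ σ.dom)
    (hmax : ∀ u ∈ σ.dom, ReachableOutside G σ.dom u t → σ.branch u <+: σ.branch x) :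
    ∃ τ : BranchMap G r, σ ≤ τ ∧ τ.dom = σ.dom ∪ {y | y ∈ p.support} := by
  induction p generalizing σ with
  | nil => exact ⟨σ, le_rfl, by simp [Set.insert_eq_of_mem hx]⟩
  | @cons x b t hxb q ih =>
    obtain ⟨hq, hxq⟩ := (Walk.cons_isPath_iff _ _).1 hp
    have hqout : ∀ y ∈ q.support, y ∉ σ.dom := fun y hy =>
      hout y (by simp [hy]) (ne_of_mem_of_not_mem hy hxq)
    have hb : b ∉ σ.dom := hqout b q.start_mem_support
    have hbt : ReachableOutside G σ.dom b t := ⟨q, fun y hy _ _ => hqout y hy⟩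
    set σ₁ := σ.attach hx hb hxb fun u hu hub => hmax u hu (hub.trans hb hbt)
    obtain ⟨τ, hτ, hdom⟩ := ih σ₁ hq (by simp [σ₁])
      (fun y hy hyb => by simp [σ₁, hyb, hqout y hy])
      (by
        rintro u (rfl | hu) hut
        · exact List.prefix_rfl
        rw [attach_branch_of_mem _ _ _ _ _ hu, attach_branch_self]
        exact (hmax u hu (hut.mono (Set.subset_insert _ _))).trans (List.prefix_append _ _))
    refine ⟨τ, (σ.le_attach ..).trans hτ, ?_⟩
    rw [hdom, attach_dom, Walk.support_cons]
    ext y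
    have := q.start_mem_support
    simp only [Set.mem_union, Set.mem_insert_iff, Set.mem_ofPred_eq, List.mem_cons]
    grind

lemma exists_le_mem (hG : G.Connected) (hfin : σ.dom.Finite) (t : V) :
    ∃ τ : BranchMap G r, σ ≤ τ ∧ τ.dom.Finite ∧ t ∈ τ.dom := by
  by_cases ht : t ∈ σ.dom
  · exact ⟨σ, le_rfl, hfin, ht⟩
  set A := {u ∈ σ.dom | ReachableOutside G σ.dom u t}
  have hA : A.Nonempty := exists_reachableOutside_of_walk (hG.preconnected r t).some ht
    ⟨r, Walk.start_mem_support _, σ.root_mem⟩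
  obtain ⟨x, ⟨hx, hxt⟩, hxmax⟩ :=
    Set.exists_max_image A (fun u => (σ.branch u).length) (hfin.subset (Set.sep_subset _ _)) hA
  have hmax : ∀ u ∈ σ.dom, ReachableOutside G σ.dom u t → σ.branch u <+: σ.branch x := by
    intro u hu hut
    rcases σ.comparable u hu x hx (hut.trans ht hxt.symm) with h | h
    · exact h
    · rw [h.eq_of_length (le_antisymm h.length_le (hxmax u ⟨hu, hut⟩))]
  classical
  obtain ⟨w, hw⟩ := hxt
  have hout : ∀ y ∈ w.bypass.support, y ≠ x → y ∉ σ.dom := fun y hy hyx => by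
    by_cases hyt : y = t
    · exact hyt ▸ ht
    · exact hw y (w.support_bypass_subset_support hy) hyx hyt
  obtain ⟨τ, hτ, hdom⟩ := σ.exists_le_of_isPath w.bypass w.bypass_isPath hx hout hmax
  exact ⟨τ, hτ, hdom ▸ hfin.union (List.finite_toSet _),
    hdom ▸ Or.inr w.bypass.end_mem_support⟩

end

section iUnion

variable {ι : Type*} {σ : ι → BranchMap G r} {v : V}

lemma branch_eq_of_directed (hσ : Directed (· ≤ ·) σ) {i j : ι} (hi : v ∈ (σ i).dom)
    (hj : v ∈ (σ j).dom) : (σ i).branch v = (σ j).branch v := by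
  obtain ⟨k, hik, hjk⟩ := hσ i j
  rw [← hik.2 v hi, ← hjk.2 v hj]

/-- Junk for `v` outside all members of the family. -/
noncomputable def iUnionBranch [Nonempty ι] (σ : ι → BranchMap G r) (v : V) : List V :=
  (σ (Classical.epsilon fun i => v ∈ (σ i).dom)).branch v

lemma iUnionBranch_eq [Nonempty ι] (hσ : Directed (· ≤ ·) σ) {i : ι} (hv : v ∈ (σ i).dom) :
    iUnionBranch σ v = (σ i).branch v :=
  branch_eq_of_directed hσ (Classical.epsilon_spec (p := fun i => v ∈ (σ i).dom) ⟨i, hv⟩) hv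

noncomputable def iUnion [Nonempty ι] (hσ : Directed (· ≤ ·) σ) : BranchMap G r where
  dom := ⋃ i, (σ i).dom
  branch := iUnionBranch σ
  root_mem := Set.mem_iUnion.2 ⟨Classical.arbitrary ι, (σ _).root_mem⟩
  branch_root := (iUnionBranch_eq hσ (σ (Classical.arbitrary ι)).root_mem).trans (σ _).branch_root
  exists_parent v hv hvr := by
    obtain ⟨i, hv⟩ := Set.mem_iUnion.1 hv
    obtain ⟨u, hu, huv, h⟩ := (σ i).exists_parent v hv hvr
    exact ⟨u, Set.mem_iUnion.2 ⟨i, hu⟩, huv, by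
      rw [iUnionBranch_eq hσ hv, iUnionBranch_eq hσ hu, h]⟩
  comparable u hu v hv h := by
    obtain ⟨i, hu⟩ := Set.mem_iUnion.1 hu
    obtain ⟨j, hv⟩ := Set.mem_iUnion.1 hv
    obtain ⟨k, hik, hjk⟩ := hσ i j
    rw [iUnionBranch_eq hσ (hik.1 hu), iUnionBranch_eq hσ (hjk.1 hv)]
    exact (σ k).comparable u (hik.1 hu) v (hjk.1 hv)
      (h.mono (Set.subset_iUnion (fun i => (σ i).dom) k))

end iUnion

section Tree

variable (σ : BranchMap G r) {u v : V}

def tree : SimpleGraph V :=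
  fromRel fun u v => σ.branch v = σ.branch u ++ [v]

variable {σ}

lemma tree_adj_of_branch_eq (h : σ.branch v = σ.branch u ++ [v]) : σ.tree.Adj u v := by
  refine (fromRel_adj _ u v).2 ⟨fun huv => ?_, .inl h⟩
  subst huv
  simpa using congrArg List.length h

lemma adj_of_branch_eq (hu : u ∈ σ.dom) (hv : v ∈ σ.dom) (h : σ.branch v = σ.branch u ++ [v]) :
    G.Adj u v := by
  have hvr : v ≠ r := by
    rintro rfl
    rw [σ.branch_root, List.singleton_eq_append_iff] at h
    obtain ⟨h, -⟩ | ⟨-, h⟩ := h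
    · exact List.not_mem_nil (h ▸ σ.mem_branch hu)
    · exact List.cons_ne_nil _ _ h
  obtain ⟨u', hu', hu'v, h'⟩ := σ.exists_parent v hv hvr
  rwa [σ.branch_injOn hu hu' (List.append_cancel_right (h.symm.trans h'))]

lemma tree_le (hσ : σ.dom = Set.univ) : σ.tree ≤ G := by
  have hmem := Set.eq_univ_iff_forall.1 hσ
  intro u v h
  rcases ((fromRel_adj _ u v).1 h).2 with h | h
  · exact adj_of_branch_eq (hmem u) (hmem v) h
  · exact (adj_of_branch_eq (hmem v) (hmem u) h).symm

lemma tree_reachable_root (hσ : σ.dom = Set.univ) (v : V) : σ.tree.Reachable r v := by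
  induction hn : (σ.branch v).length using Nat.strong_induction_on generalizing v with
  | _ n ih =>
    by_cases hvr : v = r
    · rw [hvr]
    obtain ⟨u, -, -, h⟩ := σ.exists_parent v (Set.eq_univ_iff_forall.1 hσ v) hvr
    have hlt : (σ.branch u).length < n := by simp [← hn, h]
    exact (ih _ hlt u rfl).trans (tree_adj_of_branch_eq h).reachable

lemma support_eq_reverse_branch (hσ : σ.dom = Set.univ) {a : V} (p : σ.tree.Walk a r)
    (hp : p.IsPath) : p.support = (σ.branch a).reverse := by
  suffices ∀ b (q : σ.tree.Walk a b), q.IsPath → b = r → q.support = (σ.branch a).reverse from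
    this r p hp rfl
  clear hp p
  intro b q
  induction q with
  | nil => rintro - rfl; simp [σ.branch_root]
  | @cons x y b hxy q ih =>
    intro hq hb
    obtain ⟨hq, hxq⟩ := (Walk.cons_isPath_iff _ _).1 hq
    rw [Walk.support_cons, ih hq hb]
    rcases ((fromRel_adj _ x y).1 hxy).2 with h | h
    · refine absurd ?_ hxq
      rw [ih hq hb, List.mem_reverse, h]
      exact List.mem_append_left _ (σ.mem_branch (Set.eq_univ_iff_forall.1 hσ x))
    · simp [h]

lemma treeLE_of_prefix (hσ : σ.dom = Set.univ) (h : σ.branch u <+: σ.branch v) :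
    TreeLE σ.tree r u v := fun p hp => by
  rw [← List.mem_reverse, ← Walk.support_reverse, support_eq_reverse_branch hσ _ hp.reverse,
    List.mem_reverse]
  exact h.subset (σ.mem_branch (Set.eq_univ_iff_forall.1 hσ u))

/-- Every tree edge is a bridge: the only edge leaving the subtree above a vertex `v` is the
edge from `v` to its parent. -/
lemma tree_isBridge (hσ : σ.dom = Set.univ) (h : σ.branch v = σ.branch u ++ [v]) :
    σ.tree.IsBridge s(v, u) := by
  have hmem := Set.eq_univ_iff_forall.1 hσ
  have hinj {a b : V} (hab : σ.branch a = σ.branch b) : a = b :=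
    σ.branch_injOn (hmem a) (hmem b) hab
  rw [isBridge_iff_forall_walk_mem_edges]
  intro p
  obtain ⟨⟨⟨y, z⟩, hyz⟩, hd, hy, hz⟩ :=
    p.exists_boundary_dart {y | σ.branch v <+: σ.branch y} List.prefix_rfl
      (fun hvu => by simpa [h] using hvu.length_le)
  simp only [Set.mem_ofPred_eq] at hy hz
  rcases ((fromRel_adj _ y z).1 hyz).2 with hyz | hyz
  · exact absurd (hy.trans (hyz ▸ List.prefix_append _ _)) hz
  obtain rfl : v = y :=
    hinj (((List.prefix_concat_iff.1 (hyz ▸ hy)).resolve_right hz).trans hyz.symm)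
  obtain rfl : u = z := hinj (List.append_cancel_right (h.symm.trans hyz))
  exact List.mem_map_of_mem hd

lemma tree_isAcyclic (hσ : σ.dom = Set.univ) : σ.tree.IsAcyclic := by
  rw [isAcyclic_iff_forall_adj_isBridge]
  intro u v huv
  rcases ((fromRel_adj _ u v).1 huv).2 with h | h
  · rw [Sym2.eq_swap]
    exact tree_isBridge hσ h
  · exact tree_isBridge hσ h

lemma hasNST (hσ : σ.dom = Set.univ) : HasNST G := by
  have hmem := Set.eq_univ_iff_forall.1 hσ
  have : Nonempty V := ⟨r⟩
  refine ⟨σ.tree, r, tree_le hσ,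
    ⟨⟨fun u v => (tree_reachable_root hσ u).symm.trans (tree_reachable_root hσ v)⟩,
      tree_isAcyclic hσ⟩, fun u v huv => ?_⟩
  exact (σ.comparable u (hmem u) v (hmem v) (.of_adj huv)).imp (treeLE_of_prefix hσ)
    (treeLE_of_prefix hσ)

end Tree

end BranchMap

end NST

/-- Every countable connected simple graph has a normal spanning tree. -/
theorem stmt3 {V : Type*} [Countable V] (G : SimpleGraph V) (hG : G.Connected) :
    HasNST G := by
  have := hG.nonempty
  obtain ⟨e, he⟩ := exists_surjective_nat V
  choose next le_next finite_next mem_next using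
    fun (σ : {σ : BranchMap G (e 0) // σ.dom.Finite}) (t : V) => σ.1.exists_le_mem hG σ.2 t
  let σ : ℕ → {σ : BranchMap G (e 0) // σ.dom.Finite} := fun n =>
    n.rec ⟨.base G (e 0), Set.finite_singleton _⟩ fun n σ => ⟨next σ (e n), finite_next σ (e n)⟩
  have hσ : Monotone fun n => (σ n).1 := monotone_nat_of_le_succ fun n => le_next _ _
  refine (BranchMap.iUnion hσ.directed_le).hasNST (Set.eq_univ_of_forall fun v => ?_)
  obtain ⟨n, rfl⟩ := he v
  exact Set.mem_iUnion.2 ⟨n + 1, mem_next _ _⟩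
end

section
/- If T is a normal spanning tree of a connected graph G with root r, then for every natural number n, the n-th level of T (the set of vertices at tree-distance n from r) is a dispersed set in G. -/
open Set

open NST
section NSTHelpers

variable {V : Type*} {G T : SimpleGraph V} {r u v w : V}

lemma path_eq (hT : T.IsTree) {p q : T.Walk u v} (hp : p.IsPath) (hq : q.IsPath) : p = q := by
  obtain ⟨x, -, hun⟩ := hT.existsUnique_path u v
  rw [hun p hp, hun q hq]

lemma exists_path_dist (hc : T.Connected) (u v : V) :
    ∃ p : T.Walk u v, p.IsPath ∧ p.length = T.dist u v := by
  classical
  obtain ⟨q, hq⟩ := hc.exists_walk_length_eq_dist u v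
  refine ⟨q.bypass, q.bypass_isPath, le_antisymm ?_ (SimpleGraph.dist_le _)⟩
  calc q.bypass.length ≤ q.length := q.length_bypass_le
    _ = T.dist u v := hq

lemma path_length_eq_dist (hT : T.IsTree) {p : T.Walk u v} (hp : p.IsPath) :
    p.length = T.dist u v := by
  obtain ⟨q, hq, hlen⟩ := exists_path_dist hT.isConnected u v
  rw [path_eq hT hp hq, hlen]

lemma treeLE_refl (u : V) : TreeLE T r u u := fun p _ => p.end_mem_support

lemma treeLE_trans (huv : TreeLE T r u v) (hvw : TreeLE T r v w) : TreeLE T r u w := by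
  classical
  intro p hp
  have hv := hvw p hp
  exact p.support_takeUntil_subset hv (huv (p.takeUntil v hv) (hp.takeUntil hv))

lemma treeLE_dist_le (hT : T.IsTree) (h : TreeLE T r u v) : T.dist r u ≤ T.dist r v := by
  classical
  obtain ⟨p, hp, hlen⟩ := exists_path_dist hT.isConnected r v
  have hu := h p hp
  have h1 : (p.takeUntil u hu).length = T.dist r u := path_length_eq_dist hT (hp.takeUntil hu)
  rw [← hlen, ← h1]
  exact p.length_takeUntil_le hu

lemma treeLE_eq_of_dist (hT : T.IsTree) (h : TreeLE T r u v)
    (hd : T.dist r v ≤ T.dist r u) : u = v := by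
  classical
  obtain ⟨p, hp, hlen⟩ := exists_path_dist hT.isConnected r v
  have hu := h p hp
  have h1 : (p.takeUntil u hu).length = T.dist r u := path_length_eq_dist hT (hp.takeUntil hu)
  have h2 : (p.takeUntil u hu).length + (p.dropUntil u hu).length = p.length := by
    rw [← SimpleGraph.Walk.length_append, p.take_spec hu]
  exact SimpleGraph.Walk.eq_of_length_eq_zero (p := p.dropUntil u hu) (by omega)

lemma treeLE_total (hT : T.IsTree) (hu : TreeLE T r u w) (hv : TreeLE T r v w) :
    TreeLE T r u v ∨ TreeLE T r v u := by
  classical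
  obtain ⟨p, hp, -⟩ := exists_path_dist hT.isConnected r w
  have hus := hu p hp
  have hvs := hv p hp
  obtain ⟨q, s, rfl⟩ := SimpleGraph.Walk.mem_support_iff_exists_append.mp hus
  rw [SimpleGraph.Walk.mem_support_append_iff] at hvs
  rcases hvs with hvq | hvs
  · right
    intro p' hp'
    rw [path_eq hT hp' hp.of_append_left]
    exact hvq
  · left
    obtain ⟨s1, s2, rfl⟩ := SimpleGraph.Walk.mem_support_iff_exists_append.mp hvs
    intro p' hp'
    have hqs1 : (q.append s1).IsPath := by
      have h' : ((q.append s1).append s2).IsPath := by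
        rw [← SimpleGraph.Walk.append_assoc]; exact hp
      exact h'.of_append_left
    rw [path_eq hT hp' hqs1]
    rw [SimpleGraph.Walk.mem_support_append_iff]
    exact Or.inl q.end_mem_support

/-- Key normality lemma: every `G`-walk contains a common `T`-ancestor of its endpoints. -/
lemma walk_common_ancestor (hT : T.IsTree)
    (hcmp : ∀ x y : V, G.Adj x y → TreeLE T r x y ∨ TreeLE T r y x)
    {a b : V} (p : G.Walk a b) :
    ∃ v ∈ p.support, TreeLE T r v a ∧ TreeLE T r v b := by
  induction p with
  | nil => exact ⟨_, SimpleGraph.Walk.start_mem_support _, treeLE_refl _, treeLE_refl _⟩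
  | @cons a c b hadj q ih =>
    obtain ⟨v, hvs, hvc, hvb⟩ := ih
    have hvmem : v ∈ (SimpleGraph.Walk.cons hadj q).support := by
      rw [SimpleGraph.Walk.support_cons]; exact List.mem_cons_of_mem _ hvs
    rcases hcmp _ _ hadj with hac | hca
    · rcases treeLE_total hT hvc hac with hva | hav
      · exact ⟨v, hvmem, hva, hvb⟩
      · exact ⟨a, (SimpleGraph.Walk.cons hadj q).start_mem_support, treeLE_refl _,
          treeLE_trans hav hvb⟩
    · exact ⟨v, hvmem, treeLE_trans hvc hca, hvb⟩

/-- A segment of the ray, as a walk in `G`. -/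
def raySeg {f : ℕ → V} (hf : ∀ k, G.Adj (f k) (f (k + 1))) : ∀ (i d : ℕ), G.Walk (f i) (f (i + d))
  | _, 0 => SimpleGraph.Walk.nil
  | i, d + 1 =>
      (SimpleGraph.Walk.cons (hf i) (raySeg hf (i + 1) d)).copy rfl
        (congrArg f (by omega))

lemma raySeg_support {f : ℕ → V} (hf : ∀ k, G.Adj (f k) (f (k + 1))) :
    ∀ (d i : ℕ), ∀ v ∈ (raySeg hf i d).support, ∃ t, i ≤ t ∧ t ≤ i + d ∧ v = f t := by
  intro d
  induction d with
  | zero =>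
    intro i v hv
    rw [raySeg, SimpleGraph.Walk.mem_support_nil_iff] at hv
    exact ⟨i, le_refl i, by omega, hv⟩
  | succ d ih =>
    intro i v hv
    rw [raySeg, SimpleGraph.Walk.support_copy, SimpleGraph.Walk.support_cons] at hv
    rcases List.mem_cons.mp hv with h1 | h2
    · exact ⟨i, le_refl i, by omega, h1⟩
    · obtain ⟨t, ht1, ht2, ht3⟩ := ih (i + 1) v h2
      exact ⟨t, by omega, by omega, ht3⟩

/-- A ray in `G` meets each bounded-level part of a normal spanning tree finitely often. -/
lemma ray_levels_finite (hT : T.IsTree)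
    (hcmp : ∀ x y : V, G.Adj x y → TreeLE T r x y ∨ TreeLE T r y x)
    {f : ℕ → V} (hinj : Function.Injective f) (hadj : ∀ k, G.Adj (f k) (f (k + 1))) :
    ∀ m : ℕ, {k : ℕ | T.dist r (f k) ≤ m}.Finite := by
  intro m
  induction m with
  | zero =>
    apply Set.Subsingleton.finite
    intro i hi j hj
    simp only [Set.mem_setOf_eq, Nat.le_zero] at hi hj
    have hri : r = f i := by
      rcases SimpleGraph.dist_eq_zero_iff_eq_or_not_reachable.mp hi with h | h
      · exact h
      · exact absurd (hT.isConnected.preconnected r (f i)) h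
    have hrj : r = f j := by
      rcases SimpleGraph.dist_eq_zero_iff_eq_or_not_reachable.mp hj with h | h
      · exact h
      · exact absurd (hT.isConnected.preconnected r (f j)) h
    exact hinj (hri ▸ hrj)
  | succ m ih =>
    by_contra hinf
    have hinf' : {k : ℕ | T.dist r (f k) = m + 1}.Infinite := by
      intro hfin
      apply hinf
      apply Set.Finite.subset (ih.union hfin)
      intro k hk
      simp only [Set.mem_setOf_eq, Set.mem_union] at hk ⊢
      omega
    obtain ⟨N, hN⟩ := ih.bddAbove
    obtain ⟨i, hi⟩ := (hinf'.diff (Set.finite_le_nat N)).nonempty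
    obtain ⟨j, hj⟩ := (hinf'.diff (Set.finite_le_nat i)).nonempty
    simp only [Set.mem_diff, Set.mem_setOf_eq, not_le] at hi hj
    obtain ⟨hi1, hi2⟩ := hi
    obtain ⟨hj1, hj2⟩ := hj
    have hkey : ∀ t, i ≤ t → m + 1 ≤ T.dist r (f t) := by
      intro t ht
      by_contra hlt
      have ht' : t ∈ {k : ℕ | T.dist r (f k) ≤ m} := by
        simp only [Set.mem_setOf_eq]; omega
      have := hN ht'
      omega
    have hij : i + (j - i) = j := by omega
    let p : G.Walk (f i) (f j) := (raySeg hadj i (j - i)).copy rfl (congrArg f hij)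
    obtain ⟨v, hvs, hvi, hvj⟩ := walk_common_ancestor hT hcmp p
    have hvs' : v ∈ (raySeg hadj i (j - i)).support := by
      rwa [SimpleGraph.Walk.support_copy] at hvs
    obtain ⟨t, ht1, ht2, rfl⟩ := raySeg_support hadj (j - i) i v hvs'
    have htd : m + 1 ≤ T.dist r (f t) := hkey t ht1
    have h1 : f t = f i := treeLE_eq_of_dist hT hvi (by omega)
    have h2 : f t = f j := treeLE_eq_of_dist hT hvj (by omega)
    have : i = j := hinj (h1 ▸ h2)
    omega

/-- Comparable vertices above level `n` have the same level-`≤ n` ancestry. -/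
lemma same_low_ancestors (hT : T.IsTree) {n : ℕ} {x y : V}
    (hcmp : TreeLE T r x y ∨ TreeLE T r y x)
    (hx : n < T.dist r x) (hy : n < T.dist r y)
    {v : V} (hv : T.dist r v ≤ n) : TreeLE T r v x ↔ TreeLE T r v y := by
  rcases hcmp with hxy | hyx
  · constructor
    · intro h; exact treeLE_trans h hxy
    · intro h
      rcases treeLE_total hT h hxy with h' | h'
      · exact h'
      · have := treeLE_dist_le hT h'
        omega
  · constructor
    · intro h
      rcases treeLE_total hT h hyx with h' | h'
      · exact h'
      · have := treeLE_dist_le hT h'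
        omega
    · intro h; exact treeLE_trans h hyx

end NSTHelpers
/-- Every level of a normal spanning tree is dispersed in `G`. -/
theorem stmt5 {V : Type*} (G T : SimpleGraph V) (r : V) (hG : G.Connected)
    (h : IsNormalSpanningTree G T r) (n : ℕ) :
    Dispersed G {v | T.dist r v = n} := by
  classical
  obtain ⟨hTG, hT, hcmp'⟩ := h
  have hcmp : ∀ x y : V, G.Adj x y → TreeLE T r x y ∨ TreeLE T r y x := hcmp'
  rintro f ⟨hinj, hadj⟩
  have hfin := ray_levels_finite hT hcmp hinj hadj n
  obtain ⟨N0, hN0⟩ := hfin.bddAbove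
  set N := N0 + 1 with hNdef
  have hhigh : ∀ k, N ≤ k → n < T.dist r (f k) := by
    intro k hk
    by_contra hle
    have : k ∈ {k : ℕ | T.dist r (f k) ≤ n} := by simp only [Set.mem_setOf_eq]; omega
    have := hN0 this
    omega
  -- stabilization of low ancestry along the tail
  have hstab : ∀ k, N ≤ k → ∀ v : V, T.dist r v ≤ n →
      (TreeLE T r v (f k) ↔ TreeLE T r v (f N)) := by
    intro k
    induction k with
    | zero => intro hk; omega
    | succ k ihk =>
      intro hk v hv
      rcases Nat.lt_or_ge N (k + 1) with hlt | hge
      · have hkN : N ≤ k := by omega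
        have step : TreeLE T r v (f (k + 1)) ↔ TreeLE T r v (f k) := by
          have := same_low_ancestors hT
            (x := f (k + 1)) (y := f k)
            (Or.symm (hcmp _ _ (hadj k))) (hhigh _ (by omega)) (hhigh _ hkN) hv
          exact this
        rw [step]
        exact ihk hkN v hv
      · have : N = k + 1 := by omega
        rw [this]
  obtain ⟨p0, hp0, -⟩ := exists_path_dist hT.isConnected r (f N)
  refine ⟨{v | v ∈ p0.support}, p0.support.finite_toSet, N, ?_⟩
  rintro a ha b ⟨k, hk, rfl⟩ p
  simp only [Set.mem_setOf_eq] at ha hk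
  obtain ⟨v, hvs, hva, hvb⟩ := walk_common_ancestor hT hcmp p
  have hvd : T.dist r v ≤ n := by
    have := treeLE_dist_le hT hva
    omega
  have hvN : TreeLE T r v (f N) := (hstab k hk v hvd).mp hvb
  exact ⟨v, hvN p0 hp0, hvs⟩
end

section
/- Every dispersed set of vertices in a graph G is TK^{ℵ₀}-dispersed in G. -/
open Set

open NST

namespace NSTProof

open NST SimpleGraph

variable {V : Type*} {G : SimpleGraph V}

lemma getVert_mem_support' (p : G.Walk u v) {i : ℕ} (hi : i ≤ p.length) :
    p.getVert i ∈ p.support :=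
  Walk.mem_support_iff_exists_getVert.2 ⟨i, rfl, hi⟩

lemma getVert_injOn' {p : G.Walk u v} (hp : p.IsPath) :
    ∀ i, i ≤ p.length → ∀ j, j ≤ p.length → p.getVert i = p.getVert j → i = j := by
  induction p with
  | nil => intro i hi j hj _; simp only [Walk.length_nil, Nat.le_zero] at hi hj; omega
  | cons h q ih =>
    rw [Walk.cons_isPath_iff] at hp
    intro i hi j hj hij
    rw [Walk.length_cons] at hi hj
    match i, j with
    | 0, 0 => rfl
    | 0, j+1 =>
      exfalso
      apply hp.2
      rw [Walk.getVert_zero, Walk.getVert_cons_succ] at hij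
      rw [hij]
      exact getVert_mem_support' q (by omega)
    | i+1, 0 =>
      exfalso
      apply hp.2
      rw [Walk.getVert_zero, Walk.getVert_cons_succ] at hij
      rw [← hij]
      exact getVert_mem_support' q (by omega)
    | i+1, j+1 =>
      rw [Walk.getVert_cons_succ, Walk.getVert_cons_succ] at hij
      have := ih hp.1 i (by omega) j (by omega) hij
      omega

lemma start_eq_of_mem_dropUntil [DecidableEq V] {u v w : V} {p : G.Walk u v} (hp : p.IsPath)
    (hw : w ∈ p.support) (hu : u ∈ (p.dropUntil w hw).support) : u = w := by
  by_contra hne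
  have hnd : ((p.takeUntil w hw).support ++ (p.dropUntil w hw).support.tail).Nodup := by
    rw [← Walk.support_append, Walk.take_spec]
    exact hp.support_nodup
  have hdisj := List.disjoint_of_nodup_append hnd
  have h1 : u ∈ (p.takeUntil w hw).support := Walk.start_mem_support _
  have h2 : u ∈ (p.dropUntil w hw).support.tail := by
    rw [Walk.support_eq_cons (p.dropUntil w hw)] at hu
    rcases List.mem_cons.1 hu with h | h
    · exact absurd h hne
    · exact h
  exact hdisj h1 h2

/-- Chain of subdivision paths from `branch j` to `branch (j+d)`. -/
def chainWalk (K : KSubdivision G) (j : ℕ) : (d : ℕ) → G.Walk (K.branch j) (K.branch (j + d))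
  | 0 => Walk.nil
  | d+1 => (chainWalk K j d).append (K.path (j+d) (j+d+1) (Nat.lt_succ_self _))

lemma chainWalk_support (K : KSubdivision G) (j : ℕ) :
    ∀ (d : ℕ), ∀ w ∈ (chainWalk K j d).support, w = K.branch j ∨
      ∃ k, j ≤ k ∧ k + 1 ≤ j + d ∧ w ∈ (K.path k (k+1) (Nat.lt_succ_self k)).support
  | 0 => by
    intro w hw
    left
    simpa [chainWalk] using hw
  | d+1 => by
    intro w hw
    rw [chainWalk, Walk.mem_support_append_iff] at hw
    rcases hw with hw | hw
    · rcases chainWalk_support K j d w hw with h | ⟨k, h1, h2, h3⟩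
      · exact Or.inl h
      · exact Or.inr ⟨k, h1, by omega, h3⟩
    · exact Or.inr ⟨j+d, Nat.le_add_right _ _, by omega, hw⟩

variable (K : KSubdivision G)

/-- Cumulative offsets of the concatenated path lengths. -/
def off : ℕ → ℕ
  | 0 => 0
  | k+1 => off k + (K.path k (k+1) (Nat.lt_succ_self k)).length

lemma length_pos (k : ℕ) : 0 < (K.path k (k+1) (Nat.lt_succ_self k)).length := by
  rcases Nat.eq_zero_or_pos (K.path k (k+1) (Nat.lt_succ_self k)).length with h | h
  · exact absurd (K.inj (Walk.eq_of_length_eq_zero h)) (by omega)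
  · exact h

lemma off_succ (k : ℕ) : off K (k+1) = off K k + (K.path k (k+1) (Nat.lt_succ_self k)).length :=
  rfl

lemma off_strictMono : StrictMono (off K) :=
  strictMono_nat_of_lt_succ fun k => by have := length_pos K k; rw [off_succ]; omega

lemma le_off (k : ℕ) : k ≤ off K k := by
  induction k with
  | zero => exact Nat.zero_le _
  | succ k ih => have := length_pos K k; rw [off_succ]; omega

/-- Block index of position `n`. -/
def blk (n : ℕ) : ℕ := Nat.findGreatest (fun k => off K k ≤ n) n

lemma off_blk_le (n : ℕ) : off K (blk K n) ≤ n :=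
  Nat.findGreatest_spec (P := fun k => off K k ≤ n) (m := 0) (n := n)
    (Nat.zero_le n) (Nat.zero_le n)

lemma lt_off_blk_succ (n : ℕ) : n < off K (blk K n + 1) := by
  by_contra hle
  push_neg at hle
  have h1 : blk K n + 1 ≤ n := le_trans (le_off K _) hle
  have h2 : blk K n + 1 ≤ blk K n := Nat.le_findGreatest h1 hle
  omega

lemma blk_off (k : ℕ) : blk K (off K k) = k :=
  le_antisymm ((off_strictMono K).le_iff_le.mp (off_blk_le K _))
    (Nat.le_findGreatest (le_off K k) le_rfl)

/-- The ray obtained by concatenating the paths `branch k → branch (k+1)`. -/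
def ray (n : ℕ) : V :=
  (K.path (blk K n) (blk K n + 1) (Nat.lt_succ_self _)).getVert (n - off K (blk K n))

lemma ray_eq (n : ℕ) {k : ℕ} (hk : blk K n = k) :
    ray K n = (K.path k (k+1) (Nat.lt_succ_self _)).getVert (n - off K k) := by
  subst hk; rfl

lemma ray_off (k : ℕ) : ray K (off K k) = K.branch k := by
  rw [ray_eq K (off K k) (blk_off K k), Nat.sub_self, SimpleGraph.Walk.getVert_zero]

lemma sub_off_lt (n : ℕ) {k : ℕ} (hk : blk K n = k) :
    n - off K k < (K.path k (k+1) (Nat.lt_succ_self _)).length := by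
  subst hk
  have h1 := off_blk_le K n
  have h2 := lt_off_blk_succ K n
  have h3 := off_succ K (blk K n)
  omega

lemma blk_succ_eq (n : ℕ) (h : n + 1 < off K (blk K n + 1)) : blk K (n+1) = blk K n := by
  have h1 := off_blk_le K (n+1)
  have h2 := lt_off_blk_succ K (n+1)
  have h3 := off_blk_le K n
  rcases lt_trichotomy (blk K (n+1)) (blk K n) with hlt | heq | hgt
  · have := (off_strictMono K).monotone (show blk K (n+1) + 1 ≤ blk K n from hlt)
    omega
  · exact heq
  · have := (off_strictMono K).monotone (show blk K n + 1 ≤ blk K (n+1) from hgt)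
    omega

lemma ray_adj (n : ℕ) : G.Adj (ray K n) (ray K (n+1)) := by
  have hidx := sub_off_lt K n rfl
  have h1 := off_blk_le K n
  have hcase : n + 1 < off K (blk K n + 1) ∨ n + 1 = off K (blk K n + 1) := by
    have := lt_off_blk_succ K n
    omega
  rcases hcase with hlt | heq
  · have hb : blk K (n+1) = blk K n := blk_succ_eq K n hlt
    rw [ray_eq K n rfl, ray_eq K (n+1) hb]
    have h2 : n + 1 - off K (blk K n) = (n - off K (blk K n)) + 1 := by omega
    rw [h2]
    exact Walk.adj_getVert_succ _ hidx
  · have h2 : ray K (n+1) = K.branch (blk K n + 1) := by rw [heq, ray_off]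
    have hlen : n - off K (blk K n) + 1 =
        (K.path (blk K n) (blk K n + 1) (Nat.lt_succ_self _)).length := by
      have h3 := off_succ K (blk K n)
      omega
    have h4 := Walk.adj_getVert_succ (K.path (blk K n) (blk K n + 1) (Nat.lt_succ_self _)) hidx
    rw [hlen, Walk.getVert_length] at h4
    rw [h2, ray_eq K n rfl]
    exact h4

lemma ray_inj : Function.Injective (ray K) := by
  have key : ∀ a b : ℕ, blk K a < blk K b → ray K a ≠ ray K b := by
    intro a b hab heq
    have hia := sub_off_lt K a rfl
    have hib := sub_off_lt K b rfl
    have hva : ray K b ∈ (K.path (blk K a) (blk K a + 1) (Nat.lt_succ_self _)).support := by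
      rw [← heq, ray_eq K a rfl]
      exact getVert_mem_support' _ (le_of_lt hia)
    have hvb : ray K b ∈ (K.path (blk K b) (blk K b + 1) (Nat.lt_succ_self _)).support := by
      rw [ray_eq K b rfl]
      exact getVert_mem_support' _ (le_of_lt hib)
    have hne : (blk K a, blk K a + 1) ≠ (blk K b, blk K b + 1) := by
      intro hp
      have := congrArg Prod.fst hp
      simp only at this
      omega
    obtain ⟨h1, h2⟩ := K.internallyDisjoint (blk K a) (blk K a + 1) (Nat.lt_succ_self _)
      (blk K b) (blk K b + 1) (Nat.lt_succ_self _) hne (ray K b) hva hvb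
    rcases h1 with h1 | h1 <;> rcases h2 with h2 | h2
    · have := K.inj (h1.symm.trans h2); omega
    · have := K.inj (h1.symm.trans h2); omega
    · -- ray K b = branch (blk K a + 1), the last vertex of path (blk K a)
      have h5 : (K.path (blk K a) (blk K a + 1) (Nat.lt_succ_self _)).getVert (a - off K (blk K a))
          = (K.path (blk K a) (blk K a + 1) (Nat.lt_succ_self _)).getVert
            (K.path (blk K a) (blk K a + 1) (Nat.lt_succ_self _)).length := by
        rw [Walk.getVert_length]
        rw [ray_eq K a rfl] at heq
        exact heq.trans h1
      have := getVert_injOn' (K.isPath (blk K a) (blk K a + 1) (Nat.lt_succ_self _))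
        _ (le_of_lt hia) _ le_rfl h5
      omega
    · have := K.inj (h1.symm.trans h2); omega
  intro a b heq
  rcases lt_trichotomy (blk K a) (blk K b) with hlt | hbe | hgt
  · exact absurd heq (key a b hlt)
  · have hoa := off_blk_le K a
    have hob := off_blk_le K b
    have hia := sub_off_lt K a rfl
    have hib := sub_off_lt K b hbe.symm
    have hob2 : off K (blk K a) ≤ b := by rw [hbe]; exact hob
    rw [ray_eq K a rfl, ray_eq K b hbe.symm] at heq
    have := getVert_injOn' (K.isPath (blk K a) (blk K a + 1) (Nat.lt_succ_self _))
      _ (le_of_lt hia) _ (le_of_lt hib) heq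
    omega
  · exact absurd heq.symm (key b a hgt)

lemma ray_isRay : IsRay G (ray K) := ⟨ray_inj K, ray_adj K⟩

end NSTProof

open NSTProof in
/-- Every dispersed set is `TK^{ℵ₀}`-dispersed. -/
theorem stmt6 {V : Type*} (G : SimpleGraph V) (U : Set V) (h : Dispersed G U) :
    TKDispersed G U := by
  classical
  intro K
  obtain ⟨S, hSfin, N, hsep⟩ := h (ray K) (ray_isRay K)
  -- indices whose branch vertex lies in S
  set A : Set ℕ := {k | K.branch k ∈ S} with hAdef
  have hA : A.Finite := Set.Finite.preimage (K.inj.injOn) hSfin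
  -- second indices of paths having an interior vertex in S
  set B : Set ℕ := {j | ∃ i, ∃ hij : i < j, ∃ s, s ∈ S ∧ s ∈ (K.path i j hij).support ∧
      s ≠ K.branch i ∧ s ≠ K.branch j} with hBdef
  have hB : B.Finite := by
    have hsub : B ⊆ ⋃ s ∈ S, {j | ∃ i, ∃ hij : i < j, s ∈ (K.path i j hij).support ∧
        s ≠ K.branch i ∧ s ≠ K.branch j} := by
      rintro j ⟨i, hij, s, hsS, hsup, hni, hnj⟩
      exact Set.mem_biUnion hsS ⟨i, hij, hsup, hni, hnj⟩
    refine Set.Finite.subset (Set.Finite.biUnion hSfin fun s _ => ?_) hsub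
    refine Set.Subsingleton.finite ?_
    rintro j ⟨i, hij, hsup, hni, hnj⟩ j' ⟨i', hij', hsup', hni', hnj'⟩
    by_contra hjj
    have hne : (i, j) ≠ (i', j') := by
      intro hp
      exact hjj (congrArg Prod.snd hp)
    obtain ⟨h1, _⟩ := K.internallyDisjoint i j hij i' j' hij' hne _ hsup hsup'
    rcases h1 with h1 | h1
    · exact hni h1
    · exact hnj h1
  obtain ⟨m0, hm0⟩ := (hA.union hB).bddAbove
  set m : ℕ := m0 + 1 with hmdef
  have hmA : ∀ k, K.branch k ∈ S → k < m := fun k hk =>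
    lt_of_le_of_lt (hm0 (Set.mem_union_left _ hk)) (Nat.lt_succ_self m0)
  have hmB : ∀ j ∈ B, j < m := fun j hj =>
    lt_of_le_of_lt (hm0 (Set.mem_union_right _ hj)) (Nat.lt_succ_self m0)
  -- the support of a single subdivision path, as a set
  set g : ℕ → ℕ → Set V :=
    fun i j => ⋃ (hij : i < j), {v | v ∈ (K.path i j hij).support} with hgdef
  have hgmem : ∀ i j (hij : i < j), ∀ v, v ∈ (K.path i j hij).support → v ∈ g i j :=
    fun i j hij v hv => Set.mem_iUnion.2 ⟨hij, hv⟩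
  have hgfin : ∀ i j, (g i j).Finite := by
    intro i j
    by_cases hij : i < j
    · refine Set.Finite.subset ((K.path i j hij).support.finite_toSet) ?_
      intro v hv
      obtain ⟨h', hv⟩ := Set.mem_iUnion.1 hv
      exact hv
    · refine Set.Finite.subset (Set.finite_empty) ?_
      intro v hv
      obtain ⟨h', _⟩ := Set.mem_iUnion.1 hv
      exact absurd h' hij
  set PS : Set V := ⋃ j ∈ Set.Iic m, ⋃ i ∈ Set.Iio j, g i j with hPSdef
  have hPSfin : PS.Finite :=
    Set.Finite.biUnion (Set.finite_Iic m) fun j _ =>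
      Set.Finite.biUnion (Set.finite_Iio j) fun i _ => hgfin i j
  refine ⟨S ∪ PS, hSfin.union hPSfin, ?_⟩
  intro a ha b hb p
  by_contra hcon
  push_neg at hcon
  simp only [KSubdivision.verts, Set.mem_iUnion, Set.mem_setOf_eq] at hb
  obtain ⟨i, j, hij, hbsup⟩ := hb
  rcases le_or_gt j m with hjm | hjm
  · exact hcon b (Set.mem_union_right _
      (Set.mem_biUnion (Set.mem_Iic.mpr hjm)
        (Set.mem_biUnion (Set.mem_Iio.mpr hij) (hgmem i j hij b hbsup)))) p.end_mem_support
  · have hbnot : b ∉ S ∪ PS := fun hh => hcon b hh p.end_mem_support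
    -- walk from b to branch j inside the path i j, avoiding S
    set W1 := (K.path i j hij).dropUntil b hbsup with hW1def
    have hW1 : ∀ w ∈ W1.support, w ∉ S := by
      intro w hw hwS
      rw [hW1def] at hw
      have hw' : w ∈ (K.path i j hij).support :=
        SimpleGraph.Walk.support_dropUntil_subset _ _ hw
      by_cases hwb : w = b
      · exact hbnot (Set.mem_union_left _ (hwb ▸ hwS))
      by_cases hwi : w = K.branch i
      · have hbi : K.branch i = b :=
          start_eq_of_mem_dropUntil (K.isPath i j hij) hbsup (hwi ▸ hw)
        exact hwb (hwi.trans hbi)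
      by_cases hwj : w = K.branch j
      · have := hmA j (hwj ▸ hwS); omega
      · have hjB : j ∈ B := ⟨i, hij, w, hwS, hw', hwi, hwj⟩
        have := hmB j hjB; omega
    -- chain walk from branch j far out, avoiding S
    set K0 : ℕ := max (j+1) N with hK0def
    have hjK : j ≤ K0 := le_trans (Nat.le_succ j) (le_max_left _ _)
    set W2 : G.Walk (K.branch j) (K.branch K0) :=
      (chainWalk K j (K0 - j)).copy rfl (congrArg K.branch (by omega)) with hW2def
    have hW2 : ∀ w ∈ W2.support, w ∉ S := by
      intro w hw hwS
      rw [hW2def, SimpleGraph.Walk.support_copy] at hw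
      rcases chainWalk_support K j (K0 - j) w hw with hwj | ⟨k, hk1, hk2, hk3⟩
      · have := hmA j (hwj ▸ hwS); omega
      · by_cases hwk : w = K.branch k
        · have := hmA k (hwk ▸ hwS); omega
        by_cases hwk1 : w = K.branch (k+1)
        · have := hmA (k+1) (hwk1 ▸ hwS); omega
        · have hkB : (k+1) ∈ B := ⟨k, Nat.lt_succ_self k, w, hwS, hk3, hwk, hwk1⟩
          have := hmB (k+1) hkB; omega
    -- combined walk from a to a tail vertex of the ray
    have hmem : K.branch K0 ∈ ray K '' {n | N ≤ n} :=
      ⟨off K K0, le_trans (le_max_right _ _) (le_off K K0), ray_off K K0⟩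
    obtain ⟨s, hsS, hsQ⟩ := hsep a ha (K.branch K0) hmem (p.append (W1.append W2))
    rw [SimpleGraph.Walk.mem_support_append_iff,
      SimpleGraph.Walk.mem_support_append_iff] at hsQ
    rcases hsQ with hq | hq | hq
    · exact hcon s (Set.mem_union_left _ hsS) hq
    · exact hW1 s hq hsS
    · exact hW2 s hq hsS
end

section
/- The union of finitely many TK^{ℵ₀}-dispersed sets of vertices in a graph G is again TK^{ℵ₀}-dispersed in G. -/
open Set

open NST
/-- A finite union of `TK^{ℵ₀}`-dispersed sets is `TK^{ℵ₀}`-dispersed. -/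
theorem stmt7 {V ι : Type*} (G : SimpleGraph V) (s : Finset ι) (U : ι → Set V)
    (h : ∀ i ∈ s, TKDispersed G (U i)) :
    TKDispersed G (⋃ i ∈ s, U i) := by
  intro K
  choose S hSfin hSsep using fun i (hi : i ∈ s) => h i hi K
  refine ⟨⋃ i ∈ s.attach, S i i.2, ?_, ?_⟩
  · exact Set.Finite.biUnion s.attach.finite_toSet (fun i _ => hSfin i i.2)
  · intro a ha b hb p
    simp only [Set.mem_iUnion] at ha
    obtain ⟨i, hi, hai⟩ := ha
    obtain ⟨x, hx, hxs⟩ := hSsep i hi a hai b hb p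
    exact ⟨x, Set.mem_iUnion.2 ⟨⟨i, hi⟩, Set.mem_iUnion.2 ⟨Finset.mem_attach _ _, hx⟩⟩, hxs⟩
end

section
/- Let T be a finite normal rooted tree in a connected graph G and let W be a finite set of vertices of G. Then T can be extended to a finite normal rooted tree T' ⊇ T in G (with the same root) such that W ⊆ V(T'). -/
open Set

open NST

/-!
Let `w ∉ T` and let `D` be the component of `G - T` containing `w`. Normality makes the
neighbourhood of `D` in `T` a chain: two of its vertices are joined either by an edge of `T` or by
a `T`-path through `D`. Let `t` be its top. Hanging a neighbour `d ∈ D` of `t` onto `T` as a new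
leaf keeps the tree normal, because a new `T`-path ending in `d` starts in the neighbourhood of
`D`, hence below `t < d`. Repeating this along a path from `t` to `w` inside `D`, the last leaf
added is always the top of the neighbourhood of the (shrinking) component of `w`, so `w` is
reached after finitely many steps. Induction on `W` finishes the proof.
-/

open SimpleGraph

theorem Set.Finite.exists_forall_rel_of_total {α : Type*} {R : α → α → Prop}
    (htrans : ∀ {a b c}, R a b → R b c → R a c) {s : Set α} (hs : s.Finite) (hne : s.Nonempty)
    (htotal : ∀ x ∈ s, ∀ y ∈ s, R x y ∨ R y x) : ∃ m ∈ s, ∀ x ∈ s, R x m := by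
  induction s, hs using Set.Finite.induction_on with
  | empty => exact absurd hne Set.not_nonempty_empty
  | @insert a s _ _ ih =>
    have hrefl : R a a := (htotal a (.inl rfl) a (.inl rfl)).elim id id
    rcases s.eq_empty_or_nonempty with rfl | hs
    · exact ⟨a, .inl rfl, fun x hx => by rwa [(by simpa using hx : x = a)]⟩
    obtain ⟨m, hm, hmax⟩ := ih hs fun x hx y hy => htotal x (.inr hx) y (.inr hy)
    rcases htotal a (.inl rfl) m (.inr hm) with ham | hma
    · exact ⟨m, .inr hm, by rintro x (rfl | hx) <;> [exact ham; exact hmax x hx]⟩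
    · exact ⟨a, .inl rfl, by rintro x (rfl | hx) <;> [exact hrefl; exact htrans (hmax x hx) hma]⟩

namespace SimpleGraph.Subgraph

variable {V : Type*} {G : SimpleGraph V} {T : G.Subgraph}

theorem isAcyclic_spanningCoe (hT : T.coe.IsAcyclic) : T.spanningCoe.IsAcyclic := by
  intro u c hc
  have hsupp : ∀ x ∈ c.support, x ∈ T.verts := by
    intro x hx
    obtain ⟨e, he, hxe⟩ := (c.mem_support_iff_exists_mem_edges_of_not_nil hc.not_nil).1 hx
    exact T.mem_verts_of_mem_edge (T.edgeSet_spanningCoe ▸ c.edges_subset_edgeSet he) hxe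
  -- `T.spanningCoe.induce T.verts` is `T.coe` up to unfolding
  have hc' : (c.induce T.verts hsupp).IsCycle :=
    (Walk.isCycle_map_iff_of_injective (Embedding.induce (G := T.spanningCoe) T.verts).injective).1
      (by rwa [Walk.map_induce])
  exact hT _ hc'

section Leaf

variable {t d : V} (h : G.Adj t d)

theorem verts_sup_subgraphOfAdj (ht : t ∈ T.verts) :
    (T ⊔ G.subgraphOfAdj h).verts = insert d T.verts := by
  ext x
  simp only [verts_sup, subgraphOfAdj_verts, Set.mem_union, Set.mem_insert_iff,
    Set.mem_singleton_iff]
  grind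

theorem eq_of_sup_subgraphOfAdj_adj (hd : d ∉ T.verts) {x : V}
    (hx : (T ⊔ G.subgraphOfAdj h).Adj d x) : x = t := by
  rcases hx with hx | hx
  · exact absurd hx.fst_mem hd
  · grind [subgraphOfAdj_adj, Sym2.eq_swap]

theorem isTree_sup_subgraphOfAdj (hT : T.coe.IsTree) (ht : t ∈ T.verts) (hd : d ∉ T.verts) :
    (T ⊔ G.subgraphOfAdj h).coe.IsTree := by
  refine ⟨Subgraph.connected_iff'.1 ?_, ?_⟩
  · exact connected_sup (Subgraph.connected_iff'.2 hT.connected).preconnected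
      (subgraphOfAdj_connected h).preconnected ⟨t, ht, by simp⟩
  · have hnreach : ¬ T.spanningCoe.Reachable t d := by
      rintro ⟨p⟩
      cases hp : p.reverse with
      | nil => exact hd ht
      | cons hdx _ => exact hd hdx.fst_mem
    refine IsAcyclic.embedding (coeEmbeddingSpanningCoe _) ?_
    rw [sup_spanningCoe, spanningCoe_subgraphOfAdj]
    exact (isAcyclic_spanningCoe hT.isAcyclic).sup_edge_of_not_reachable hnreach

end Leaf

end SimpleGraph.Subgraph

namespace NST

variable {V : Type*} {G : SimpleGraph V}

section TreeOrder

variable {T T₁ : G.Subgraph} {r u v w : V}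

theorem subTreeLE_refl (hr : r ∈ T.verts) (hu : u ∈ T.verts) : SubTreeLE G T r u u :=
  ⟨hr, hu, hu, fun p _ => p.end_mem_support⟩

theorem SubTreeLE.trans (h₁ : SubTreeLE G T r u v) (h₂ : SubTreeLE G T r v w) :
    SubTreeLE G T r u w := by
  classical
  obtain ⟨hr, hu, hv, huv⟩ := h₁
  obtain ⟨_, _, hw, hvw⟩ := h₂
  refine ⟨hr, hu, hw, fun p hp => ?_⟩
  have hvp := hvw p hp
  exact p.support_takeUntil_subset_support hvp (huv _ (hp.takeUntil hvp))

theorem subTreeLE_or_subTreeLE_of_adj (hT : T.coe.IsAcyclic) (hr : r ∈ T.verts)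
    (huv : T.Adj u v) : SubTreeLE G T r u v ∨ SubTreeLE G T r v u := by
  by_contra! h
  obtain ⟨p, hp, hup⟩ : ∃ p : T.coe.Walk ⟨r, hr⟩ ⟨v, huv.snd_mem⟩, p.IsPath ∧
      ⟨u, huv.fst_mem⟩ ∉ p.support := by
    simpa [SubTreeLE, hr, huv.fst_mem, huv.snd_mem] using h.1
  obtain ⟨q, hq, hvq⟩ : ∃ q : T.coe.Walk ⟨r, hr⟩ ⟨u, huv.fst_mem⟩, q.IsPath ∧
      ⟨v, huv.snd_mem⟩ ∉ q.support := by
    simpa [SubTreeLE, hr, huv.fst_mem, huv.snd_mem] using h.2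
  exact hup (hT.mem_support_of_ne_mem_support_of_adj_of_isPath hp hq huv.symm hvq)

theorem SubTreeLE.mono (hle : T ≤ T₁) (hT : T.coe.Preconnected) (hT₁ : T₁.coe.IsAcyclic)
    (h : SubTreeLE G T r u v) : SubTreeLE G T₁ r u v := by
  classical
  obtain ⟨hr, hu, hv, h⟩ := h
  obtain ⟨q⟩ := hT ⟨r, hr⟩ ⟨v, hv⟩
  have hq : (q.toPath.1.map (Subgraph.inclusion hle)).IsPath :=
    q.toPath.2.map (Subgraph.inclusion.injective hle)
  refine ⟨hle.1 hr, hle.1 hu, hle.1 hv, fun p hp => ?_⟩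
  rw [Subtype.mk.inj (hT₁.subsingleton_path _ _ |>.elim ⟨p, hp⟩ ⟨_, hq⟩)]
  erw [Walk.support_map]
  exact List.mem_map_of_mem (h _ q.toPath.2)

theorem subTreeLE_of_forall_adj_eq {t d : V} (hr : r ∈ T.verts) (ht : t ∈ T.verts)
    (hd : d ∈ T.verts) (hrd : r ≠ d) (hnbr : ∀ x, T.Adj d x → x = t) :
    SubTreeLE G T r t d := by
  refine ⟨hr, ht, hd, fun p _ => ?_⟩
  rw [← List.mem_reverse, ← Walk.support_reverse]
  cases hp : p.reverse with
  | nil => exact absurd rfl hrd.symm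
  | cons h q =>
    obtain rfl : _ = (⟨t, ht⟩ : T.verts) := Subtype.ext (hnbr _ h)
    exact List.mem_cons_of_mem _ q.start_mem_support

end TreeOrder

section Outside

variable {T T₁ : G.Subgraph} {u v w : V}

/-- The vertex set of the component of `G - T` containing `w`; empty if `w ∈ T`. -/
def componentOutside (G : SimpleGraph V) (T : G.Subgraph) (w : V) : Set V :=
  {v | ∃ p : G.Walk w v, ∀ x ∈ p.support, x ∉ T.verts}

theorem not_mem_of_mem_componentOutside (hv : v ∈ componentOutside G T w) : v ∉ T.verts :=
  let ⟨p, hp⟩ := hv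
  hp v p.end_mem_support

theorem mem_componentOutside_comm (hv : v ∈ componentOutside G T w) :
    w ∈ componentOutside G T v :=
  let ⟨p, hp⟩ := hv
  ⟨p.reverse, fun x hx => hp x (by simpa using hx)⟩

theorem mem_componentOutside_trans (hv : v ∈ componentOutside G T w)
    (hu : u ∈ componentOutside G T v) : u ∈ componentOutside G T w :=
  let ⟨p, hp⟩ := hv
  let ⟨q, hq⟩ := hu
  ⟨p.append q, fun x hx => (Walk.mem_support_append_iff p q).1 hx |>.elim (hp x) (hq x)⟩

theorem componentOutside_eq_of_mem (hv : v ∈ componentOutside G T w) :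
    componentOutside G T v = componentOutside G T w :=
  Set.ext fun _ => ⟨mem_componentOutside_trans hv,
    mem_componentOutside_trans (mem_componentOutside_comm hv)⟩

theorem componentOutside_anti (hle : T ≤ T₁) :
    componentOutside G T₁ w ⊆ componentOutside G T w :=
  fun _ ⟨p, hp⟩ => ⟨p, fun x hx hxT => hp x hx (hle.1 hxT)⟩

theorem exists_adj_componentOutside (hG : G.Connected) (hv : v ∈ T.verts) (hw : w ∉ T.verts) :
    ∃ x ∈ T.verts, ∃ z ∈ componentOutside G T w, G.Adj x z := by
  obtain ⟨p⟩ := hG.preconnected w v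
  have hw' : w ∈ componentOutside G T w := ⟨.nil, by simpa using hw⟩
  obtain ⟨e, -, he, he'⟩ := p.exists_boundary_dart _ hw'
    (fun h => not_mem_of_mem_componentOutside h hv)
  refine ⟨e.snd, ?_, e.fst, he, e.adj.symm⟩
  by_contra hT
  obtain ⟨q, hq⟩ := he
  refine he' ⟨q.concat e.adj, fun x hx => ?_⟩
  rw [Walk.support_concat, List.mem_append, List.mem_singleton] at hx
  rcases hx with hx | rfl
  · exact hq x hx
  · exact hT

end Outside

section TPath

variable {T T₁ : G.Subgraph} {u v : V} {p : G.Walk u v}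

theorem IsTPath.reverse (hp : IsTPath G T p) : IsTPath G T p.reverse := by
  obtain ⟨hpath, hlen, hu, hv, hint, hedges⟩ := hp
  refine ⟨hpath.reverse, by simpa using hlen, hv, hu, fun x hx hxv hxu => ?_, fun e he => ?_⟩
  · exact hint x (by simpa using hx) hxu hxv
  · exact hedges e (by simpa using he)

theorem IsTPath.of_le (hle : T ≤ T₁) (hu : u ∈ T.verts) (hv : v ∈ T.verts)
    (hp : IsTPath G T₁ p) : IsTPath G T p := by
  obtain ⟨hpath, hlen, -, -, hint, hedges⟩ := hp
  exact ⟨hpath, hlen, hu, hv, fun x hx hxu hxv hxT => hint x hx hxu hxv (hle.1 hxT),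
    fun e he heT => hedges e he (Subgraph.edgeSet_mono hle heT)⟩

theorem isTPath_of_isPath (hp : p.IsPath) (huv : u ≠ v) (hu : u ∈ T.verts) (hv : v ∈ T.verts)
    (hint : ∀ x ∈ p.support, x ≠ u → x ≠ v → x ∉ T.verts) (hadj : ¬ T.Adj u v) :
    IsTPath G T p := by
  refine ⟨hp, Nat.pos_of_ne_zero fun h => huv (p.eq_of_length_eq_zero h), hu, hv, hint, ?_⟩
  intro e he heT
  induction e using Sym2.ind with
  | _ a b =>
  have hab : T.Adj a b := heT
  have hends : ∀ x ∈ p.support, x ∈ T.verts → x = u ∨ x = v := by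
    intro x hx hxT
    by_contra! h
    exact hint x hx h.1 h.2 hxT
  rcases hends a (p.fst_mem_support_of_mem_edges he) hab.fst_mem with rfl | rfl <;>
    rcases hends b (p.snd_mem_support_of_mem_edges he) hab.snd_mem with rfl | rfl
  · exact hab.ne rfl
  · exact hadj hab
  · exact hadj hab.symm
  · exact hab.ne rfl

end TPath

section Normal

variable {T : G.Subgraph} {r t d : V}

theorem subTreeLE_or_subTreeLE_of_adj_componentOutside (hT : IsNormalTree G T r)
    {x y z₁ z₂ : V} (hx : x ∈ T.verts) (hy : y ∈ T.verts) (hxz : G.Adj x z₁) (hyz : G.Adj y z₂)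
    (hz : z₂ ∈ componentOutside G T z₁) :
    SubTreeLE G T r x y ∨ SubTreeLE G T r y x := by
  classical
  obtain ⟨hT, hr, hnormal⟩ := hT
  by_cases hxy : x = y
  · subst hxy
    exact .inl (subTreeLE_refl hr hx)
  by_cases hadj : T.Adj x y
  · exact subTreeLE_or_subTreeLE_of_adj hT.isAcyclic hr hadj
  obtain ⟨q, hq⟩ := hz
  let p : G.Walk x y := (Walk.cons hxz (q.concat hyz.symm)).bypass
  refine hnormal x y p (isTPath_of_isPath (Walk.bypass_isPath _) hxy hx hy ?_ hadj)
  intro a ha hax hay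
  have ha' := Walk.support_bypass_subset_support _ ha
  rw [Walk.support_cons, Walk.support_concat, List.mem_cons, List.mem_append,
    List.mem_singleton] at ha'
  rcases ha' with rfl | ha' | rfl
  · exact absurd rfl hax
  · exact hq a ha'
  · exact absurd rfl hay

theorem isNormalTree_sup_subgraphOfAdj (hT : IsNormalTree G T r) (ht : t ∈ T.verts)
    (hd : d ∉ T.verts) (h : G.Adj t d)
    (hmax : ∀ x ∈ T.verts, ∀ z ∈ componentOutside G T d, G.Adj x z → SubTreeLE G T r x t) :
    IsNormalTree G (T ⊔ G.subgraphOfAdj h) r := by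
  obtain ⟨hTtree, hr, hnormal⟩ := hT
  set T₁ := T ⊔ G.subgraphOfAdj h
  have hle : T ≤ T₁ := le_sup_left
  have hT₁ : T₁.coe.IsTree := Subgraph.isTree_sup_subgraphOfAdj h hTtree ht hd
  have hverts : T₁.verts = insert d T.verts := Subgraph.verts_sup_subgraphOfAdj h ht
  have hmono {a b : V} (hab : SubTreeLE G T r a b) : SubTreeLE G T₁ r a b :=
    hab.mono hle hTtree.connected.preconnected hT₁.isAcyclic
  have htd : SubTreeLE G T₁ r t d :=
    subTreeLE_of_forall_adj_eq (hle.1 hr) (hle.1 ht) (by simp [hverts])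
      (fun hrd => hd (hrd ▸ hr)) fun _ => Subgraph.eq_of_sup_subgraphOfAdj_adj h hd
  have below_leaf {u : V} (hu : u ∈ T.verts) (p : G.Walk u d) (hp : IsTPath G T₁ p) :
      SubTreeLE G T₁ r u d := by
    obtain ⟨hpath, -, -, -, hint, -⟩ := hp
    cases p with
    | nil => exact absurd hu hd
    | cons hadj q =>
      have hq : ∀ x ∈ q.support, x ∉ T.verts := by
        intro x hx hxT
        have hxu : x ≠ u := by rintro rfl; exact (Walk.cons_isPath_iff _ _).1 hpath |>.2 hx
        have hxd : x ≠ d := by rintro rfl; exact hd hxT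
        exact hint x (List.mem_cons_of_mem _ hx) hxu hxd (hle.1 hxT)
      have hz : _ ∈ componentOutside G T d := mem_componentOutside_comm ⟨q, hq⟩
      exact (hmono (hmax u hu _ hz hadj)).trans htd
  refine ⟨hT₁, hle.1 hr, fun u v p hp => ?_⟩
  have hu : u ∈ insert d T.verts := hverts ▸ hp.2.2.1
  have hv : v ∈ insert d T.verts := hverts ▸ hp.2.2.2.1
  rcases hu with rfl | hu <;> rcases hv with rfl | hv
  · exact absurd (Walk.length_eq_zero_iff.2 (Walk.isPath_iff_nil.1 hp.1)) hp.2.1.ne'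
  · exact .inr (below_leaf hv _ hp.reverse)
  · exact .inl (below_leaf hu p hp)
  · exact (hnormal u v p (hp.of_le hle hu hv)).imp hmono hmono

end Normal

section Extension

variable {r : V}

theorem exists_normal_extension_of_isPath {c w : V} (q : G.Walk c w) (hq : q.IsPath) :
    ∀ T : G.Subgraph, IsNormalTree G T r → T.verts.Finite → c ∈ T.verts →
      (∀ x ∈ q.support, x ≠ c → x ∉ T.verts) →
      (∀ x ∈ T.verts, ∀ z ∈ componentOutside G T w, G.Adj x z → SubTreeLE G T r x c) →
      ∃ T' : G.Subgraph, T ≤ T' ∧ IsNormalTree G T' r ∧ T'.verts.Finite ∧ w ∈ T'.verts := by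
  induction q with
  | nil => exact fun T hT hfin hc _ _ => ⟨T, le_rfl, hT, hfin, hc⟩
  | @cons c c' w hadj q ih =>
    intro T hT hfin hc hout hmax
    obtain ⟨hq', hcq⟩ := (Walk.cons_isPath_iff _ _).1 hq
    have hqout : ∀ x ∈ q.support, x ∉ T.verts := fun x hx =>
      hout x (List.mem_cons_of_mem _ hx) fun hxc => hcq (hxc ▸ hx)
    have hc' : c' ∉ T.verts := hqout c' q.start_mem_support
    have hcomp : componentOutside G T c' = componentOutside G T w :=
      componentOutside_eq_of_mem (mem_componentOutside_comm ⟨q, hqout⟩)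
    have hT₁ := isNormalTree_sup_subgraphOfAdj hT hc hc' hadj (hcomp ▸ hmax)
    have hverts := Subgraph.verts_sup_subgraphOfAdj hadj hc
    have hcc' : SubTreeLE G (T ⊔ G.subgraphOfAdj hadj) r c c' :=
      subTreeLE_of_forall_adj_eq hT₁.2.1 (by simp [hverts, hc]) (by simp [hverts])
        (fun h => hc' (h ▸ hT.2.1)) fun _ => Subgraph.eq_of_sup_subgraphOfAdj_adj hadj hc'
    obtain ⟨T', hle, hT', hfin', hw⟩ := ih hq' _ hT₁ (hverts ▸ hfin.insert c') (by simp [hverts])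
      (fun x hx hxc' => by simpa [hverts, hxc'] using hqout x hx)
      (fun x hx z hz hxz => by
        rcases (hverts ▸ hx : x ∈ insert c' T.verts) with rfl | hx
        · exact subTreeLE_refl hT₁.2.1 hx
        · exact ((hmax x hx z (componentOutside_anti le_sup_left hz) hxz).mono le_sup_left
            hT.1.connected.preconnected hT₁.1.isAcyclic).trans hcc')
    exact ⟨T', le_sup_left.trans hle, hT', hfin', hw⟩

theorem exists_normal_extension_mem (hG : G.Connected) {T : G.Subgraph}
    (hT : IsNormalTree G T r) (hfin : T.verts.Finite) (w : V) :
    ∃ T' : G.Subgraph, T ≤ T' ∧ IsNormalTree G T' r ∧ T'.verts.Finite ∧ w ∈ T'.verts := by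
  classical
  by_cases hw : w ∈ T.verts
  · exact ⟨T, le_rfl, hT, hfin, hw⟩
  let N : Set V := {x | x ∈ T.verts ∧ ∃ z ∈ componentOutside G T w, G.Adj x z}
  obtain ⟨t, ⟨ht, z, hz, htz⟩, hmax⟩ : ∃ t ∈ N, ∀ x ∈ N, SubTreeLE G T r x t := by
    refine Set.Finite.exists_forall_rel_of_total SubTreeLE.trans (hfin.subset fun x hx => hx.1)
      (exists_adj_componentOutside hG hT.2.1 hw) ?_
    rintro x ⟨hx, z₁, hz₁, hxz₁⟩ y ⟨hy, z₂, hz₂, hyz₂⟩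
    exact subTreeLE_or_subTreeLE_of_adj_componentOutside hT hx hy hxz₁ hyz₂
      (componentOutside_eq_of_mem hz₁ ▸ hz₂)
  obtain ⟨p, hp⟩ := mem_componentOutside_comm hz
  let q : G.Walk t w := (Walk.cons htz p).bypass
  refine exists_normal_extension_of_isPath q (Walk.bypass_isPath _) T hT hfin ht ?_
    fun x hx z hz hxz => hmax x ⟨hx, z, hz, hxz⟩
  intro x hx hxt
  have hx' := Walk.support_bypass_subset_support _ hx
  rw [Walk.support_cons, List.mem_cons] at hx'
  exact hx'.elim (fun h => absurd h hxt) (hp x)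

end Extension

end NST

/-- A finite normal rooted tree in a connected graph can be extended to a finite
normal rooted tree with the same root covering any given finite vertex set. -/
theorem stmt8 {V : Type*} (G : SimpleGraph V) (hG : G.Connected) (T : G.Subgraph)
    (r : V) (hT : IsNormalTree G T r) (hfin : T.verts.Finite)
    (W : Set V) (hW : W.Finite) :
    ∃ T' : G.Subgraph, T ≤ T' ∧ IsNormalTree G T' r ∧ T'.verts.Finite ∧
      W ⊆ T'.verts := by
  induction W, hW using Set.Finite.induction_on with
  | empty => exact ⟨T, le_rfl, hT, hfin, Set.empty_subset _⟩
  | @insert w W _ _ ih =>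
    obtain ⟨T₁, hle₁, hT₁, hfin₁, hW₁⟩ := ih
    obtain ⟨T₂, hle₂, hT₂, hfin₂, hw₂⟩ := NST.exists_normal_extension_mem hG hT₁ hfin₁ w
    exact ⟨T₂, hle₁.trans hle₂, hT₂, hfin₂, Set.insert_subset hw₂ (hW₁.trans hle₂.1)⟩
end

section
/- Let T ⊆ T' be rooted normal trees in a graph G with the same root, where T' is normal in G. Then for every connected component D of G − T, the intersection of D with T' induces a connected subgraph. -/
open Set

/-!
If `u ≤ v` in the tree-order of `T'` and `u ∉ T`, then the `u`–`v` path in `T'` avoids `T`: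
a vertex `w ∈ T` on it, joined to `r` inside `T`, would yield an `r`–`v` path in `T'` missing `u`.
Being connected and disjoint from `T`, that path lies in `D`, so comparable vertices of
`D ∩ V(T')` are joined inside `D ∩ V(T')`. For arbitrary `x, y ∈ D ∩ V(T')`, cut an `x`–`y`
walk in `D` at its vertices in `T'`: consecutive cut points are adjacent in `G` or are the ends
of a `T'`-path, hence comparable by normality of `T'`.
-/

open SimpleGraph

namespace NST

variable {V : Type*} {G : SimpleGraph V}

lemma exists_walk_of_induce_reachable {s : Set V} {x y : s} (h : (G.induce s).Reachable x y) :
    ∃ p : G.Walk x y, ∀ w ∈ p.support, w ∈ s := by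
  obtain ⟨p⟩ := h
  have hp : ∀ w ∈ (p.map (Embedding.induce s).toHom).support, w ∈ s := by
    rw [Walk.support_map]
    rintro _ hz
    obtain ⟨z, -, rfl⟩ := List.mem_map.mp hz
    exact z.2
  exact ⟨_, hp⟩

lemma IsComponentOf.mem_of_mem_support {A D : Set V} (hD : IsComponentOf G A D) {u v : V}
    (p : G.Walk u v) (hu : u ∈ D) (hpA : ∀ w ∈ p.support, w ∈ A) :
    ∀ w ∈ p.support, w ∈ D := by
  have hconn : (G.induce (D ∪ {w | w ∈ p.support})).Connected :=
    induce_union_connected hD.2.2.1.preconnected p.connected_induce_support.preconnected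
      ⟨u, hu, p.start_mem_support⟩
  have hmax := hD.2.2.2 _ subset_union_left (union_subset hD.1 hpA) hconn
  exact fun w hw => hmax ▸ Or.inr hw

theorem induce_reachable_of_segments {S A : Set V}
    (hseg : ∀ ⦃u v : V⦄ (hu : u ∈ S) (hv : v ∈ S) (q : G.Walk u v),
      (∀ w ∈ q.support, w ∈ A) → (∀ w ∈ q.support, w ≠ u → w ≠ v → w ∉ S) →
      (G.induce S).Reachable ⟨u, hu⟩ ⟨v, hv⟩)
    {x y : V} (hx : x ∈ S) (hy : y ∈ S) (p : G.Walk x y) (hpA : ∀ w ∈ p.support, w ∈ A) :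
    (G.induce S).Reachable ⟨x, hx⟩ ⟨y, hy⟩ := by
  -- Walk along `p`, carrying the piece `q` traversed since the last vertex `x` of `S`.
  suffices H : ∀ {a y : V} (p : G.Walk a y) (hy : y ∈ S), (∀ w ∈ p.support, w ∈ A) →
      ∀ {x : V} (hx : x ∈ S) (q : G.Walk x a), (∀ w ∈ q.support, w ∈ A) →
      (∀ w ∈ q.support, w ≠ x → w ∉ S) → (G.induce S).Reachable ⟨x, hx⟩ ⟨y, hy⟩ from
    H p hy hpA hx .nil (by simpa using hpA x p.start_mem_support) (by simp)
  intro a y p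
  induction p with
  | nil =>
    intro hy _ x hx q _ hqS
    obtain rfl : x = _ := by_contra fun hne => hqS _ q.end_mem_support (Ne.symm hne) hy
    rfl
  | @cons a b y hab p ih =>
    intro hy hpA x hx q hqA hqS
    have hbA : b ∈ A := hpA b (by simp)
    have hqA' : ∀ w ∈ (q.concat hab).support, w ∈ A := by
      simp only [Walk.support_concat, List.mem_append, List.mem_singleton]
      rintro w (hw | rfl)
      exacts [hqA w hw, hbA]
    have hpA' : ∀ w ∈ p.support, w ∈ A := fun w hw => hpA w (by simp [hw])
    by_cases hb : b ∈ S
    · refine (hseg hx hb (q.concat hab) hqA' fun w hw hwx hwb => ?_).trans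
        (ih hy hpA' hb .nil (by simpa using hbA) (by simp))
      simp only [Walk.support_concat, List.mem_append, List.mem_singleton] at hw
      exact hqS w (hw.resolve_right hwb) hwx
    · refine ih hy hpA' hx (q.concat hab) hqA' fun w hw hwx => ?_
      simp only [Walk.support_concat, List.mem_append, List.mem_singleton] at hw
      rcases hw with hw | rfl
      exacts [hqS w hw hwx, hb]

variable {T T' : G.Subgraph} {r : V}

lemma SubTreeLE.notMem_of_mem_support (hTT' : T ≤ T') (hT : T.coe.Preconnected)
    (hrT : r ∈ T.verts) {u v : V} (hle : SubTreeLE G T' r u v) (huT : u ∉ T.verts)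
    {hu : u ∈ T'.verts} {hv : v ∈ T'.verts} {q : T'.coe.Walk ⟨u, hu⟩ ⟨v, hv⟩} (hq : q.IsPath)
    {w : T'.verts} (hw : w ∈ q.support) : (w : V) ∉ T.verts := by
  classical
  intro hwT
  obtain ⟨hr', hu', hv', hpath⟩ := hle
  obtain ⟨p⟩ := hT ⟨r, hrT⟩ ⟨w, hwT⟩
  have hpT : ∀ z ∈ (p.map (Subgraph.inclusion hTT')).support, (z : V) ∈ T.verts := by
    rw [Walk.support_map]
    rintro _ hz
    obtain ⟨z, -, rfl⟩ := List.mem_map.mp hz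
    exact z.2
  have hw' : w ∈ q.reverse.support := by simpa using hw
  have hqu : ⟨u, hu⟩ ∉ (q.reverse.takeUntil w hw').reverse.support := by
    rw [Walk.support_reverse, List.mem_reverse]
    exact Walk.endpoint_notMem_support_takeUntil hq.reverse _
      fun h => by subst h; exact huT hwT
  -- `r ⟶ w` inside `T`, then back along `q` from `w` to `v`; it must pass through `u`.
  let walk : T'.coe.Walk ⟨r, hr'⟩ ⟨v, hv'⟩ := (p.map (Subgraph.inclusion hTT')).append
    (q.reverse.takeUntil w hw').reverse
  have hmem := Walk.support_bypass_subset_support _ (hpath walk.bypass walk.bypass_isPath)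
  rcases (Walk.mem_support_append_iff _ _).mp hmem with h | h
  exacts [huT (hpT _ h), hqu h]

lemma SubTreeLE.induce_reachable (hTT' : T ≤ T') (hT : T.coe.Preconnected) (hrT : r ∈ T.verts)
    (hT' : T'.coe.Preconnected) {D : Set V} (hD : IsComponentOf G T.vertsᶜ D) {u v : V}
    (hle : SubTreeLE G T' r u v) (hu : u ∈ D ∩ T'.verts) (hv : v ∈ D ∩ T'.verts) :
    (G.induce (D ∩ T'.verts)).Reachable ⟨u, hu⟩ ⟨v, hv⟩ := by
  classical
  obtain ⟨q⟩ := hT' ⟨u, hu.2⟩ ⟨v, hv.2⟩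
  have hQ : ∀ w ∈ (q.bypass.map T'.hom).support, w ∈ T'.verts ∧ w ∉ T.verts := by
    simp only [Walk.support_map, List.mem_map]
    rintro _ ⟨w, hw, rfl⟩
    exact ⟨w.2, hle.notMem_of_mem_support hTT' hT hrT (hD.1 hu.1) q.bypass_isPath hw⟩
  have hQD := hD.mem_of_mem_support _ hu.1 fun w hw => (hQ w hw).2
  exact ((q.bypass.map T'.hom).induce (D ∩ T'.verts)
    fun w hw => ⟨hQD w hw, (hQ w hw).1⟩).reachable

lemma IsNormalTree.induce_reachable_of_segment (hTT' : T ≤ T') (hT : T.coe.Preconnected)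
    (hrT : r ∈ T.verts) (hT' : IsNormalTree G T' r) {D : Set V}
    (hD : IsComponentOf G T.vertsᶜ D) {u v : V} (hu : u ∈ D ∩ T'.verts) (hv : v ∈ D ∩ T'.verts)
    (q : G.Walk u v) (hqD : ∀ w ∈ q.support, w ∈ D)
    (hint : ∀ w ∈ q.support, w ≠ u → w ≠ v → w ∉ D ∩ T'.verts) :
    (G.induce (D ∩ T'.verts)).Reachable ⟨u, hu⟩ ⟨v, hv⟩ := by
  classical
  by_cases huv : u = v
  · subst huv; rfl
  by_cases hadj : G.Adj u v
  · exact (induce_adj.mpr hadj).reachable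
  set p := q.bypass
  have hend : ∀ w ∈ p.support, w ∈ T'.verts → w = u ∨ w = v := fun w hw hwT' => by
    have hwq := q.support_bypass_subset_support hw
    by_contra! h
    exact hint w hwq h.1 h.2 ⟨hqD w hwq, hwT'⟩
  have htp : IsTPath G T' p := by
    refine ⟨q.bypass_isPath, Nat.pos_of_ne_zero fun h => huv (Walk.eq_of_length_eq_zero h),
      hu.2, hv.2, fun w hw hwu hwv hwT' => (hend w hw hwT').elim hwu hwv, fun e he heT' => ?_⟩
    obtain ⟨a, b⟩ := e
    have hab := p.adj_of_mem_edges he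
    have hT'ab : T'.Adj a b := heT'
    rcases hend a (p.fst_mem_support_of_mem_edges he) hT'ab.fst_mem with rfl | rfl <;>
      rcases hend b (p.snd_mem_support_of_mem_edges he) hT'ab.snd_mem with rfl | rfl
    exacts [hab.ne rfl, hadj hab, hadj hab.symm, hab.ne rfl]
  rcases hT'.2.2 u v p htp with hle | hle
  · exact hle.induce_reachable hTT' hT hrT hT'.1.connected.preconnected hD hu hv
  · exact (hle.induce_reachable hTT' hT hrT hT'.1.connected.preconnected hD hv hu).symm

end NST

open NST

/-- If `T ⊆ T'` are rooted trees with common root and `T'` is normal in `G`,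
then for every component `D` of `G − T`, the set `D ∩ V(T')` spans a connected
(possibly empty) subgraph of `G`. -/
theorem stmt9 {V : Type*} (G : SimpleGraph V) (T T' : G.Subgraph) (r : V)
    (hTT' : T ≤ T') (hTtree : T.coe.IsTree) (hrT : r ∈ T.verts)
    (hT' : IsNormalTree G T' r)
    (D : Set V) (hD : IsComponentOf G T.vertsᶜ D) :
    (G.induce (D ∩ T'.verts)).Preconnected := by
  rintro ⟨x, hx⟩ ⟨y, hy⟩
  obtain ⟨p, hpD⟩ := exists_walk_of_induce_reachable (hD.2.2.1.preconnected ⟨x, hx.1⟩ ⟨y, hy.1⟩)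
  exact induce_reachable_of_segments (A := D)
    (fun u v hu hv q hqD hint => hT'.induce_reachable_of_segment hTT'
      hTtree.connected.preconnected hrT hD hu hv q hqD hint) hx hy p hpD
end

section
/- Let T ⊆ T' be rooted normal trees in G with the same root, and let s, s' be vertices of T' lying in distinct components of D ∩ T' for some component D of G − T. Then s and s' are incomparable in the tree-order of T'. -/
open Set

open NST

/- Suppose `s ≤ s'` in `T'`, so the `T'`-path from `r` to `s'` runs through `s`. No vertex `x` after
`s` on it lies in `T`: the path from `r` to `x` would then lie in the subtree `T ∋ r` and pass through
`s ∈ D ⊆ G - T`. So the segment from `s` to `s'` avoids `T`, hence stays in the component `D` of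
`G - T`, and being a walk in `T'` it joins `s` to `s'` inside `D ∩ T'`, i.e. `S = S'`. -/

namespace NST.IsComponentOf

open SimpleGraph

variable {W : Type*} {H : SimpleGraph W} {A S : Set W}

theorem subset_of_connected (hS : IsComponentOf H A S) {t : Set W}
    (ht : (H.induce t).Connected) (htA : t ⊆ A) (hSt : (S ∩ t).Nonempty) : t ⊆ S := by
  have hmax := hS.2.2.2 (S ∪ t) subset_union_left (union_subset hS.1 htA)
    (induce_union_connected hS.2.2.1.preconnected ht.preconnected hSt)
  exact hmax ▸ subset_union_right

theorem support_subset (hS : IsComponentOf H A S) {x y : W} (hx : x ∈ S) (w : H.Walk x y)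
    (hw : ∀ z ∈ w.support, z ∈ A) : ∀ z ∈ w.support, z ∈ S :=
  hS.subset_of_connected w.connected_induce_support hw ⟨x, hx, w.start_mem_support⟩

theorem eq_of_mem (hS : IsComponentOf H A S) {S' : Set W} (hS' : IsComponentOf H A S')
    {v : W} (hv : v ∈ S) (hv' : v ∈ S') : S = S' :=
  (hS'.subset_of_connected hS.2.2.1 hS.1 ⟨v, hv', hv⟩).antisymm
    (hS.subset_of_connected hS'.2.2.1 hS'.1 ⟨v, hv, hv'⟩)

end NST.IsComponentOf

namespace SimpleGraph.Subgraph

variable {V : Type*} {G : SimpleGraph V} {T T' : G.Subgraph}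

theorem mem_verts_of_mem_isPath_support (hTT' : T ≤ T') (hT' : T'.coe.IsTree)
    (hT : T.coe.Connected) {a b : T'.verts} (ha : (a : V) ∈ T.verts) (hb : (b : V) ∈ T.verts)
    {p : T'.coe.Walk a b} (hp : p.IsPath) {x : T'.verts} (hx : x ∈ p.support) :
    (x : V) ∈ T.verts := by
  classical
  obtain ⟨w⟩ := hT.preconnected ⟨a, ha⟩ ⟨b, hb⟩
  obtain ⟨w, hw⟩ := w.toPath
  have hpw : p = w.map (inclusion hTT') :=
    (hT'.existsUnique_path a b).unique hp (hw.map (inclusion.injective hTT'))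
  have hx : x ∈ (w.map (inclusion hTT')).support := hpw ▸ hx
  rw [Walk.support_map] at hx
  obtain ⟨z, -, rfl⟩ := List.mem_map.1 hx
  exact z.2

theorem not_mem_verts_of_isPath_append (hTT' : T ≤ T') (hT' : T'.coe.IsTree)
    (hT : T.coe.Connected) {r s x : T'.verts} (hr : (r : V) ∈ T.verts) (hs : (s : V) ∉ T.verts)
    {p : T'.coe.Walk r s} {q : T'.coe.Walk s x} (hpq : (p.append q).IsPath) :
    (x : V) ∉ T.verts := fun hx =>
  hs <| mem_verts_of_mem_isPath_support hTT' hT' hT hr hx hpq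
    (Walk.mem_support_append_iff _ _ |>.2 (.inl p.end_mem_support))

end SimpleGraph.Subgraph

open SimpleGraph in
theorem NST.not_subTreeLE_of_mem_components {V : Type*} {G : SimpleGraph V} {T T' : G.Subgraph}
    {r : V} (hTT' : T ≤ T') (hT : T.coe.Connected) (hrT : r ∈ T.verts) (hT' : T'.coe.IsTree)
    {D : Set V} (hD : IsComponentOf G T.vertsᶜ D) {S S' : Set V}
    (hS : IsComponentOf T'.spanningCoe (D ∩ T'.verts) S)
    (hS' : IsComponentOf T'.spanningCoe (D ∩ T'.verts) S') (hne : S ≠ S')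
    {s s' : V} (hs : s ∈ S) (hs' : s' ∈ S') : ¬ SubTreeLE G T' r s s' := by
  classical
  rintro ⟨hr, hsT', hs'T', hle⟩
  obtain ⟨p, hp⟩ := (hT'.connected.preconnected ⟨r, hr⟩ ⟨s', hs'T'⟩).some.toPath
  have hsp := hle p hp
  have hsD : s ∈ D := (hS.1 hs).1
  set seg := p.dropUntil _ hsp
  have hseg_T : ∀ x ∈ seg.support, (x : V) ∉ T.verts := fun x hx => by
    refine Subgraph.not_mem_verts_of_isPath_append hTT' hT' hT hrT (hD.1 hsD)
      (p := p.takeUntil _ hsp) (q := seg.takeUntil x hx) ?_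
    have hpath : ((p.takeUntil _ hsp).append seg).IsPath := by rwa [Walk.take_spec]
    rw [← seg.take_spec hx, Walk.append_assoc] at hpath
    exact hpath.of_append_left
  let ι : T'.coe →g T'.spanningCoe := ⟨Subtype.val, id⟩
  let q := seg.map ι
  have hq_support {z : V} (hz : z ∈ q.support) : ∃ x ∈ seg.support, (x : V) = z :=
    List.mem_map.1 (by rwa [Walk.support_map] at hz)
  have hq_D : ∀ z ∈ q.support, z ∈ D := by
    rw [← Walk.support_mapLe_eq_support T'.spanningCoe_le]
    refine hD.support_subset hsD _ fun z hz => ?_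
    rw [Walk.support_mapLe_eq_support] at hz
    obtain ⟨x, hx, rfl⟩ := hq_support hz
    exact hseg_T x hx
  have hs'S : s' ∈ S := by
    refine hS.support_subset hs q (fun z hz => ⟨hq_D z hz, ?_⟩) s' q.end_mem_support
    obtain ⟨x, -, rfl⟩ := hq_support hz
    exact x.2
  exact hne (hS.eq_of_mem hS' hs'S hs')

/-- Vertices in distinct components of `D ∩ T'` are incomparable in the
tree-order of `T'`. -/
theorem stmt19 {V : Type*} (G : SimpleGraph V) (T T' : G.Subgraph) (r : V)
    (hTT' : T ≤ T') (hTtree : T.coe.IsTree) (hrT : r ∈ T.verts)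
    (hT' : IsNormalTree G T' r)
    (D : Set V) (hD : IsComponentOf G T.vertsᶜ D)
    (S S' : Set V) (hS : IsComponentOf T'.spanningCoe (D ∩ T'.verts) S)
    (hS' : IsComponentOf T'.spanningCoe (D ∩ T'.verts) S') (hne : S ≠ S')
    (s s' : V) (hs : s ∈ S) (hs' : s' ∈ S') :
    ¬ SubTreeLE G T' r s s' ∧ ¬ SubTreeLE G T' r s' s :=
  ⟨not_subTreeLE_of_mem_components hTT' hTtree.connected hrT hT'.1 hD hS hS' hne hs hs',
    not_subTreeLE_of_mem_components hTT' hTtree.connected hrT hT'.1 hD hS' hS hne.symm hs' hs⟩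
end
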